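/- arXiv:1906.03413 — 6 statements merged into one kernel-verified Lean document; each statement's English description precedes it below -/
import Mathlib

section
/- There exist orthogonal projections P and Q on the Hilbert space ℂ⁴ with P not orthogonal to Q, and two density operators ρ₁ and ρ₂ on ℂ⁴ (which may be taken to be rank-one, i.e. pure states), such that tr(ρ₁P) = tr(ρ₂P) and tr(ρ₁Q) = tr(ρ₂Q), but tr(ρ₁(P ∧ Q)) ≠ tr(ρ₂(P ∧ Q)). Hence the probability assigned to a conjunction P ∧ Q is not a function of the probabilities assigned to P and Q: quantum states are non-truth-functional valuations for the conjunction. -/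
noncomputable section

abbrev H4 : Type := EuclideanSpace ℂ (Fin 4)

/-- An orthogonal projection: an idempotent, self-adjoint bounded operator. -/
def IsOrthoProj (P : H4 →L[ℂ] H4) : Prop := IsIdempotentElem P ∧ IsSelfAdjoint P

/-- The range of a bounded operator, as a submodule. -/
def rng (P : H4 →L[ℂ] H4) : Submodule ℂ H4 := LinearMap.range (P : H4 →ₗ[ℂ] H4)

/-- Orthogonal projection onto a subspace, as an operator. -/
def sproj (K : Submodule ℂ H4) : H4 →L[ℂ] H4 := K.subtypeL.comp K.orthogonalProjection

/-- The trace of a bounded operator. -/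
def tr (T : H4 →L[ℂ] H4) : ℂ := LinearMap.trace ℂ H4 ↑T

/-- A density operator: positive with trace one. -/
def IsDensityOperator (ρ : H4 →L[ℂ] H4) : Prop := ρ.IsPositive ∧ tr ρ = 1

/-- The lattice meet of two projections: projection onto the intersection of the ranges. -/
def Pmeet (P Q : H4 →L[ℂ] H4) : H4 →L[ℂ] H4 := sproj (rng P ⊓ rng Q)

abbrev φ4 : Matrix (Fin 4) (Fin 4) ℂ ≃⋆ₐ[ℂ] (H4 →L[ℂ] H4) := Matrix.toEuclideanCLM

lemma tr_phi (M : Matrix (Fin 4) (Fin 4) ℂ) : tr (φ4 M) = M.trace := by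
  rw [tr, Matrix.coe_toEuclideanCLM_eq_toEuclideanLin, Matrix.toEuclideanLin_eq_toLin,
    LinearMap.trace_eq_matrix_trace ℂ (PiLp.basisFun 2 ℂ (Fin 4)), LinearMap.toMatrix_toLin]

lemma orthoProj_phi {M : Matrix (Fin 4) (Fin 4) ℂ} (h1 : M * M = M) (h2 : M.conjTranspose = M) :
    IsOrthoProj (φ4 M) := by
  constructor
  · show φ4 M * φ4 M = φ4 M
    rw [← map_mul, h1]
  · show star (φ4 M) = φ4 M
    rw [← map_star]
    exact congrArg _ h2

lemma isPositive_of_orthoProj {T : H4 →L[ℂ] H4} (h : IsOrthoProj T) : T.IsPositive := by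
  refine ⟨h.2.isSymmetric, fun x => ?_⟩
  have h1 : T (T x) = T x := by
    conv_rhs => rw [← h.1]
    rfl
  have : inner ℂ (T x) x = (inner ℂ (T x) (T x) : ℂ) := by
    conv_lhs => rw [← h1]
    rw [← ContinuousLinearMap.adjoint_inner_right, h.2.adjoint_eq]
  rw [ContinuousLinearMap.reApplyInnerSelf, this, inner_self_eq_norm_sq_to_K]
  rw [← RCLike.ofReal_pow, RCLike.ofReal_re]
  positivity

lemma mem_rng_iff {T : H4 →L[ℂ] H4} (h : IsIdempotentElem T) {x : H4} :
    x ∈ rng T ↔ T x = x := by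
  constructor
  · rintro ⟨y, rfl⟩
    show T (T y) = T y
    conv_rhs => rw [← h]
    rfl
  · intro hx
    exact ⟨x, hx⟩

lemma sproj_rng {T : H4 →L[ℂ] H4} (h : IsOrthoProj T) : sproj (rng T) = T := by
  refine ContinuousLinearMap.ext fun x => ?_
  show ((rng T).orthogonalProjection x : H4) = T x
  apply Submodule.eq_starProjection_of_mem_orthogonal
  · exact ⟨x, rfl⟩
  · intro u hu
    obtain ⟨y, rfl⟩ := hu
    show (inner ℂ ((T : H4 →ₗ[ℂ] H4) y) (x - T x) : ℂ) = 0
    have : (inner ℂ (T y) (T x) : ℂ) = inner ℂ (T y) x := by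
      rw [← ContinuousLinearMap.adjoint_inner_left, h.2.adjoint_eq]
      have h1 : T (T y) = T y := by
        conv_rhs => rw [← h.1]
        rfl
      rw [h1]
    rw [inner_sub_right]
    simp only [ContinuousLinearMap.coe_coe]
    rw [this, sub_self]

lemma rng_eq_span {T : H4 →L[ℂ] H4} {w : H4} (hw : T w = w)
    (hT : ∀ x, ∃ c : ℂ, T x = c • w) : rng T = Submodule.span ℂ {w} := by
  apply le_antisymm
  · rintro x ⟨y, rfl⟩
    obtain ⟨c, hc⟩ := hT y
    show T y ∈ _
    exact hc ▸ Submodule.smul_mem _ _ (Submodule.mem_span_singleton_self w)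
  · rw [Submodule.span_singleton_le_iff_mem]
    exact ⟨w, hw⟩

lemma phi_apply (M : Matrix (Fin 4) (Fin 4) ℂ) (x : H4) (i : Fin 4) :
    φ4 M x i = M.mulVec ((WithLp.equiv 2 (Fin 4 → ℂ)) x) i :=
  congrFun (Matrix.ofLp_toEuclideanCLM M x) i

def MP : Matrix (Fin 4) (Fin 4) ℂ := !![1,0,0,0; 0,1,0,0; 0,0,0,0; 0,0,0,0]
def MQ : Matrix (Fin 4) (Fin 4) ℂ := !![1,0,0,0; 0,0,0,0; 0,0,1,0; 0,0,0,0]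
def MR : Matrix (Fin 4) (Fin 4) ℂ := !![1,0,0,0; 0,0,0,0; 0,0,0,0; 0,0,0,0]
def M1 : Matrix (Fin 4) (Fin 4) ℂ :=
  !![1/4,1/4,1/4,1/4; 1/4,1/4,1/4,1/4; 1/4,1/4,1/4,1/4; 1/4,1/4,1/4,1/4]
def M2 : Matrix (Fin 4) (Fin 4) ℂ := !![0,0,0,0; 0,1/2,1/2,0; 0,1/2,1/2,0; 0,0,0,0]

def w1 : H4 := (WithLp.equiv 2 (Fin 4 → ℂ)).symm ![1,1,1,1]
def w2 : H4 := (WithLp.equiv 2 (Fin 4 → ℂ)).symm ![0,1,1,0]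

set_option maxHeartbeats 1000000 in
lemma hMP : MP * MP = MP := by
  ext i j
  fin_cases i <;> fin_cases j <;>
    simp [MP, Matrix.mul_apply, Fin.sum_univ_four, Matrix.vecHead, Matrix.vecTail]

set_option maxHeartbeats 1000000 in
lemma hMPh : MP.conjTranspose = MP := by
  ext i j
  fin_cases i <;> fin_cases j <;>
    simp [MP, Matrix.conjTranspose_apply, Matrix.vecHead, Matrix.vecTail]

set_option maxHeartbeats 1000000 in
lemma hMQ : MQ * MQ = MQ := by
  ext i j
  fin_cases i <;> fin_cases j <;>
    simp [MQ, Matrix.mul_apply, Fin.sum_univ_four, Matrix.vecHead, Matrix.vecTail]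

set_option maxHeartbeats 1000000 in
lemma hMQh : MQ.conjTranspose = MQ := by
  ext i j
  fin_cases i <;> fin_cases j <;>
    simp [MQ, Matrix.conjTranspose_apply, Matrix.vecHead, Matrix.vecTail]

set_option maxHeartbeats 1000000 in
lemma hMR : MR * MR = MR := by
  ext i j
  fin_cases i <;> fin_cases j <;>
    simp [MR, Matrix.mul_apply, Fin.sum_univ_four, Matrix.vecHead, Matrix.vecTail]

set_option maxHeartbeats 1000000 in
lemma hMRh : MR.conjTranspose = MR := by
  ext i j
  fin_cases i <;> fin_cases j <;>
    simp [MR, Matrix.conjTranspose_apply, Matrix.vecHead, Matrix.vecTail]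

set_option maxHeartbeats 1000000 in
lemma hM1 : M1 * M1 = M1 := by
  ext i j
  fin_cases i <;> fin_cases j <;>
    norm_num [M1, Matrix.mul_apply, Fin.sum_univ_succ, Matrix.vecHead, Matrix.vecTail]

set_option maxHeartbeats 1000000 in
lemma hM1h : M1.conjTranspose = M1 := by
  ext i j
  fin_cases i <;> fin_cases j <;>
    norm_num [M1, Matrix.conjTranspose_apply, Matrix.vecHead, Matrix.vecTail]

set_option maxHeartbeats 1000000 in
lemma hM2 : M2 * M2 = M2 := by
  ext i j
  fin_cases i <;> fin_cases j <;>
    norm_num [M2, Matrix.mul_apply, Fin.sum_univ_succ, Matrix.vecHead, Matrix.vecTail]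

set_option maxHeartbeats 1000000 in
lemma hM2h : M2.conjTranspose = M2 := by
  ext i j
  fin_cases i <;> fin_cases j <;>
    norm_num [M2, Matrix.conjTranspose_apply, Matrix.vecHead, Matrix.vecTail]

set_option maxHeartbeats 1000000 in
lemma hPQ : MP * MQ = MR := by
  ext i j
  fin_cases i <;> fin_cases j <;>
    simp [MP, MQ, MR, Matrix.mul_apply, Fin.sum_univ_four, Matrix.vecHead, Matrix.vecTail]

set_option maxHeartbeats 1000000 in
lemma hQP : MQ * MP = MR := by
  ext i j
  fin_cases i <;> fin_cases j <;>
    simp [MP, MQ, MR, Matrix.mul_apply, Fin.sum_univ_four, Matrix.vecHead, Matrix.vecTail]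

set_option maxHeartbeats 1000000 in
lemma hPR : MP * MR = MR := by
  ext i j
  fin_cases i <;> fin_cases j <;>
    simp [MP, MR, Matrix.mul_apply, Fin.sum_univ_four, Matrix.vecHead, Matrix.vecTail]

set_option maxHeartbeats 1000000 in
lemma hQR : MQ * MR = MR := by
  ext i j
  fin_cases i <;> fin_cases j <;>
    simp [MQ, MR, Matrix.mul_apply, Fin.sum_univ_four, Matrix.vecHead, Matrix.vecTail]

lemma M1_apply (x : H4) : φ4 M1 x = ((x 0 + x 1 + x 2 + x 3) / 4) • w1 := by
  ext i
  rw [phi_apply]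
  fin_cases i <;>
    simp [M1, w1, Matrix.mulVec, dotProduct, (show (Fin.succ 2 : Fin 4) = 3 from rfl), Fin.sum_univ_four,
      Matrix.vecHead, Matrix.vecTail, Matrix.cons_val] <;> ring

lemma M2_apply (x : H4) : φ4 M2 x = ((x 1 + x 2) / 2) • w2 := by
  ext i
  rw [phi_apply]
  fin_cases i <;>
    simp [M2, w2, Matrix.mulVec, dotProduct, (show (Fin.succ 2 : Fin 4) = 3 from rfl), Fin.sum_univ_four,
      Matrix.vecHead, Matrix.vecTail, Matrix.cons_val] <;> ring

lemma oP : IsOrthoProj (φ4 MP) := orthoProj_phi hMP hMPh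
lemma oQ : IsOrthoProj (φ4 MQ) := orthoProj_phi hMQ hMQh
lemma oR : IsOrthoProj (φ4 MR) := orthoProj_phi hMR hMRh
lemma o1 : IsOrthoProj (φ4 M1) := orthoProj_phi hM1 hM1h
lemma o2 : IsOrthoProj (φ4 M2) := orthoProj_phi hM2 hM2h

lemma rng_inf : rng (φ4 MP) ⊓ rng (φ4 MQ) = rng (φ4 MR) := by
  ext x
  rw [Submodule.mem_inf, mem_rng_iff oP.1, mem_rng_iff oQ.1, mem_rng_iff oR.1]
  constructor
  · rintro ⟨h1, h2⟩
    have e : φ4 MR = φ4 MP * φ4 MQ := by rw [← map_mul, hPQ]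
    rw [e, ContinuousLinearMap.mul_apply, h2, h1]
  · intro h
    have e1 : φ4 MP * φ4 MR = φ4 MR := by rw [← map_mul, hPR]
    have e2 : φ4 MQ * φ4 MR = φ4 MR := by rw [← map_mul, hQR]
    constructor
    · conv_lhs => rw [← h]
      rw [← ContinuousLinearMap.mul_apply, e1, h]
    · conv_lhs => rw [← h]
      rw [← ContinuousLinearMap.mul_apply, e2, h]

lemma meet_eq : Pmeet (φ4 MP) (φ4 MQ) = φ4 MR := by
  rw [Pmeet, rng_inf, sproj_rng oR]

lemma w1_coords : w1 0 = 1 ∧ w1 1 = 1 ∧ w1 2 = 1 ∧ w1 3 = 1 := by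
  refine ⟨?_, ?_, ?_, ?_⟩ <;> simp [w1, Matrix.vecHead, Matrix.vecTail]

lemma w2_coords : w2 0 = 0 ∧ w2 1 = 1 ∧ w2 2 = 1 ∧ w2 3 = 0 := by
  refine ⟨?_, ?_, ?_, ?_⟩ <;> simp [w2, Matrix.vecHead, Matrix.vecTail]

lemma w1_ne : w1 ≠ 0 := by
  intro h
  have h0 : w1 0 = (0 : H4) 0 := by rw [h]
  rw [w1_coords.1] at h0
  simp at h0

lemma w2_ne : w2 ≠ 0 := by
  intro h
  have h0 : w2 1 = (0 : H4) 1 := by rw [h]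
  rw [w2_coords.2.1] at h0
  simp at h0

lemma rng1 : rng (φ4 M1) = Submodule.span ℂ {w1} := by
  apply rng_eq_span
  · rw [M1_apply, w1_coords.1, w1_coords.2.1, w1_coords.2.2.1, w1_coords.2.2.2]
    norm_num
  · exact fun x => ⟨_, M1_apply x⟩

lemma rng2 : rng (φ4 M2) = Submodule.span ℂ {w2} := by
  apply rng_eq_span
  · rw [M2_apply, w2_coords.2.1, w2_coords.2.2.1]
    norm_num
  · exact fun x => ⟨_, M2_apply x⟩

/-- Quantum states are non-truth-functional for the conjunction: on `ℂ⁴` there are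
non-orthogonal projections `P, Q` and two (pure, rank-one) density operators `ρ₁, ρ₂`
assigning the same probabilities to `P` and to `Q` but different probabilities to
`P ∧ Q`. -/
theorem conjunction_not_truth_functional :
    ∃ P Q ρ₁ ρ₂ : H4 →L[ℂ] H4,
      IsOrthoProj P ∧ IsOrthoProj Q ∧ P * Q ≠ 0 ∧
      IsDensityOperator ρ₁ ∧ IsDensityOperator ρ₂ ∧
      (IsOrthoProj ρ₁ ∧ Module.finrank ℂ (rng ρ₁) = 1) ∧
      (IsOrthoProj ρ₂ ∧ Module.finrank ℂ (rng ρ₂) = 1) ∧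
      tr (ρ₁ * P) = tr (ρ₂ * P) ∧
      tr (ρ₁ * Q) = tr (ρ₂ * Q) ∧
      tr (ρ₁ * Pmeet P Q) ≠ tr (ρ₂ * Pmeet P Q) := by
  refine ⟨φ4 MP, φ4 MQ, φ4 M1, φ4 M2, oP, oQ, ?_, ⟨isPositive_of_orthoProj o1, ?_⟩,
    ⟨isPositive_of_orthoProj o2, ?_⟩,
    ⟨o1, by rw [rng1]; exact finrank_span_singleton w1_ne⟩,
    ⟨o2, by rw [rng2]; exact finrank_span_singleton w2_ne⟩, ?_, ?_, ?_⟩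
  · intro hc
    rw [← map_mul, hPQ] at hc
    have h0 : MR = 0 := φ4.injective (hc.trans (map_zero φ4).symm)
    have h00 := Matrix.ext_iff.2 h0 0 0
    simp [MR] at h00
  · rw [tr_phi]
    norm_num [M1, Matrix.trace, Matrix.diag, Fin.sum_univ_succ, Matrix.vecHead, Matrix.vecTail]
  · rw [tr_phi]
    norm_num [M2, Matrix.trace, Matrix.diag, Fin.sum_univ_succ, Matrix.vecHead, Matrix.vecTail]
  · rw [← map_mul, ← map_mul, tr_phi, tr_phi]
    norm_num [M1, M2, MP, Matrix.trace, Matrix.diag, Matrix.mul_apply, Fin.sum_univ_succ,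
      Matrix.vecHead, Matrix.vecTail]
  · rw [← map_mul, ← map_mul, tr_phi, tr_phi]
    norm_num [M1, M2, MQ, Matrix.trace, Matrix.diag, Matrix.mul_apply, Fin.sum_univ_succ,
      Matrix.vecHead, Matrix.vecTail]
  · rw [meet_eq, ← map_mul, ← map_mul, tr_phi, tr_phi]
    norm_num [M1, M2, MR, Matrix.trace, Matrix.diag, Matrix.mul_apply, Fin.sum_univ_succ,
      Matrix.vecHead, Matrix.vecTail]
end
end

section
/- Let H be a finite-dimensional complex Hilbert space and let f be a real-valued function on the set of self-adjoint bounded operators on H satisfying the functionality condition: f(g(A)) = g(f(A)) for every self-adjoint operator A and every continuous function g : ℝ → ℝ (g applied via functional calculus). Then f is a partial homomorphism on compatible observables: whenever A = g₁(C) and B = g₂(C) for a self-adjoint operator C and continuous functions g₁, g₂ : ℝ → ℝ, one has f(AB) = f(A)·f(B), and f(αA + βB) = α·f(A) + β·f(B) for all real numbers α, β. -/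
noncomputable section

variable {H : Type*} [NormedAddCommGroup H] [InnerProductSpace ℂ H] [FiniteDimensional ℂ H]

/-- A prediction function — a real-valued function `f` on the self-adjoint bounded
operators satisfying the functionality condition `f (g A) = g (f A)` for every
continuous `g : ℝ → ℝ` (applied via the continuous functional calculus) — is a partial
homomorphism on compatible observables: if `A = g₁ C` and `B = g₂ C` for a self-adjoint
`C` and continuous `g₁, g₂`, then `f (A * B) = f A * f B` and
`f (α • A + β • B) = α * f A + β * f B` for all real `α, β`. -/
theorem prediction_function_partial_homomorphism
    (f : (H →L[ℂ] H) → ℝ)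
    (hf : ∀ A : H →L[ℂ] H, IsSelfAdjoint A →
      ∀ g : ℝ → ℝ, Continuous g → f (cfc g A) = g (f A))
    (C : H →L[ℂ] H) (hC : IsSelfAdjoint C)
    (g₁ g₂ : ℝ → ℝ) (hg₁ : Continuous g₁) (hg₂ : Continuous g₂)
    (A B : H →L[ℂ] H) (hA : A = cfc g₁ C) (hB : B = cfc g₂ C) :
    f (A * B) = f A * f B ∧
    ∀ α β : ℝ, f (α • A + β • B) = α * f A + β * f B := by
  subst hA hB
  constructor
  · rw [← cfc_mul g₁ g₂ C hg₁.continuousOn hg₂.continuousOn,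
      hf C hC (fun x => g₁ x * g₂ x) (hg₁.mul hg₂), hf C hC g₁ hg₁, hf C hC g₂ hg₂]
  · intro α β
    rw [← cfc_smul α g₁ C hg₁.continuousOn, ← cfc_smul β g₂ C hg₂.continuousOn,
      ← cfc_add C (fun x => α • g₁ x) (fun x => β • g₂ x) ((hg₁.const_smul α).continuousOn)
        ((hg₂.const_smul β).continuousOn),
      hf C hC (fun x => α • g₁ x + β • g₂ x) ((hg₁.const_smul α).add (hg₂.const_smul β)),
      hf C hC g₁ hg₁, hf C hC g₂ hg₂]
    simp [smul_eq_mul]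
end
end

section
/- Let H be a finite-dimensional complex Hilbert space with 3 ≤ dim H. Then there is no real-valued function f on the set of self-adjoint bounded operators on H satisfying the functionality condition f(g(A)) = g(f(A)) for every self-adjoint operator A and every continuous function g : ℝ → ℝ (g applied via functional calculus). That is, no prediction function exists in dimension at least 3. -/
set_option synthInstance.maxHeartbeats 1000000
set_option maxHeartbeats 2000000
set_option linter.unusedSectionVars false
set_option linter.unusedVariables false

theorem KS_core
    (r0 r1 r2 r3 r4 r5 r6 r7 r8 r9 r10 r11 r12 r13 r14 r15 r16 r17 r18 r19 r20 r21 r22 r23 r24 r25 r26 r27 r28 r29 r30 r31 r32 r33 r34 r35 r36 r37 r38 r39 r40 r41 r42 r43 r44 r45 r46 r47 r48 r49 r50 r51 r52 r53 r54 r55 r56 r57 r58 : ℝ)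
    (h0 : r0 = 0 ∨ r0 = 1)
    (h1 : r1 = 0 ∨ r1 = 1)
    (h2 : r2 = 0 ∨ r2 = 1)
    (h3 : r3 = 0 ∨ r3 = 1)
    (h4 : r4 = 0 ∨ r4 = 1)
    (h5 : r5 = 0 ∨ r5 = 1)
    (h6 : r6 = 0 ∨ r6 = 1)
    (h7 : r7 = 0 ∨ r7 = 1)
    (h8 : r8 = 0 ∨ r8 = 1)
    (h9 : r9 = 0 ∨ r9 = 1)
    (h10 : r10 = 0 ∨ r10 = 1)
    (h11 : r11 = 0 ∨ r11 = 1)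
    (h12 : r12 = 0 ∨ r12 = 1)
    (h13 : r13 = 0 ∨ r13 = 1)
    (h14 : r14 = 0 ∨ r14 = 1)
    (h15 : r15 = 0 ∨ r15 = 1)
    (h16 : r16 = 0 ∨ r16 = 1)
    (h17 : r17 = 0 ∨ r17 = 1)
    (h18 : r18 = 0 ∨ r18 = 1)
    (h19 : r19 = 0 ∨ r19 = 1)
    (h20 : r20 = 0 ∨ r20 = 1)
    (h21 : r21 = 0 ∨ r21 = 1)
    (h22 : r22 = 0 ∨ r22 = 1)
    (h23 : r23 = 0 ∨ r23 = 1)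
    (h24 : r24 = 0 ∨ r24 = 1)
    (h25 : r25 = 0 ∨ r25 = 1)
    (h26 : r26 = 0 ∨ r26 = 1)
    (h27 : r27 = 0 ∨ r27 = 1)
    (h28 : r28 = 0 ∨ r28 = 1)
    (h29 : r29 = 0 ∨ r29 = 1)
    (h30 : r30 = 0 ∨ r30 = 1)
    (h31 : r31 = 0 ∨ r31 = 1)
    (h32 : r32 = 0 ∨ r32 = 1)
    (h33 : r33 = 0 ∨ r33 = 1)
    (h34 : r34 = 0 ∨ r34 = 1)
    (h35 : r35 = 0 ∨ r35 = 1)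
    (h36 : r36 = 0 ∨ r36 = 1)
    (h37 : r37 = 0 ∨ r37 = 1)
    (h38 : r38 = 0 ∨ r38 = 1)
    (h39 : r39 = 0 ∨ r39 = 1)
    (h40 : r40 = 0 ∨ r40 = 1)
    (h41 : r41 = 0 ∨ r41 = 1)
    (h42 : r42 = 0 ∨ r42 = 1)
    (h43 : r43 = 0 ∨ r43 = 1)
    (h44 : r44 = 0 ∨ r44 = 1)
    (h45 : r45 = 0 ∨ r45 = 1)
    (h46 : r46 = 0 ∨ r46 = 1)
    (h47 : r47 = 0 ∨ r47 = 1)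
    (h48 : r48 = 0 ∨ r48 = 1)
    (h49 : r49 = 0 ∨ r49 = 1)
    (h50 : r50 = 0 ∨ r50 = 1)
    (h51 : r51 = 0 ∨ r51 = 1)
    (h52 : r52 = 0 ∨ r52 = 1)
    (h53 : r53 = 0 ∨ r53 = 1)
    (h54 : r54 = 0 ∨ r54 = 1)
    (h55 : r55 = 0 ∨ r55 = 1)
    (h56 : r56 = 0 ∨ r56 = 1)
    (h57 : r57 = 0 ∨ r57 = 1)
    (h58 : r58 = 0 ∨ r58 = 1)
    (e0 : r0 + r3 + r21 = 1)
    (e1 : r0 + r15 + r26 = 1)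
    (e2 : r1 + r7 + r21 = 1)
    (e3 : r1 + r10 + r58 = 1)
    (e4 : r1 + r31 + r51 = 1)
    (e5 : r2 + r4 + r21 = 1)
    (e6 : r2 + r14 + r47 = 1)
    (e7 : r2 + r27 + r41 = 1)
    (e8 : r3 + r19 + r44 = 1)
    (e9 : r3 + r20 + r22 = 1)
    (e10 : r3 + r23 + r43 = 1)
    (e11 : r4 + r16 + r46 = 1)
    (e12 : r4 + r25 + r42 = 1)
    (e13 : r5 + r6 + r21 = 1)
    (e14 : r5 + r11 + r57 = 1)
    (e15 : r5 + r30 + r52 = 1)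
    (e16 : r6 + r13 + r56 = 1)
    (e17 : r6 + r28 + r53 = 1)
    (e18 : r7 + r17 + r55 = 1)
    (e19 : r7 + r24 + r54 = 1)
    (e20 : r8 + r22 + r45 = 1)
    (e21 : r9 + r20 + r48 = 1)
    (e22 : r10 + r22 + r25 = 1)
    (e23 : r11 + r20 + r27 = 1)
    (e24 : r12 + r26 + r40 = 1)
    (e25 : r13 + r16 + r26 = 1)
    (e26 : r13 + r33 + r44 = 1)
    (e27 : r14 + r17 + r26 = 1)
    (e28 : r14 + r22 + r30 = 1)
    (e29 : r15 + r24 + r27 = 1)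
    (e30 : r15 + r25 + r28 = 1)
    (e31 : r16 + r20 + r31 = 1)
    (e32 : r17 + r34 + r43 = 1)
    (e33 : r18 + r26 + r39 = 1)
    (e34 : r19 + r37 + r47 = 1)
    (e35 : r19 + r42 + r50 = 1)
    (e36 : r23 + r36 + r46 = 1)
    (e37 : r23 + r41 + r49 = 1)
    (e38 : r29 + r35 + r44 = 1)
    (e39 : r29 + r39 + r48 = 1)
    (e40 : r32 + r38 + r43 = 1)
    (e41 : r32 + r40 + r45 = 1)
    : False := by
  have p0 : 0 ≤ r0 := by rcases h0 with h|h <;> simp [h]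
  have p1 : 0 ≤ r1 := by rcases h1 with h|h <;> simp [h]
  have p2 : 0 ≤ r2 := by rcases h2 with h|h <;> simp [h]
  have p3 : 0 ≤ r3 := by rcases h3 with h|h <;> simp [h]
  have p4 : 0 ≤ r4 := by rcases h4 with h|h <;> simp [h]
  have p5 : 0 ≤ r5 := by rcases h5 with h|h <;> simp [h]
  have p6 : 0 ≤ r6 := by rcases h6 with h|h <;> simp [h]
  have p7 : 0 ≤ r7 := by rcases h7 with h|h <;> simp [h]
  have p8 : 0 ≤ r8 := by rcases h8 with h|h <;> simp [h]
  have p9 : 0 ≤ r9 := by rcases h9 with h|h <;> simp [h]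
  have p10 : 0 ≤ r10 := by rcases h10 with h|h <;> simp [h]
  have p11 : 0 ≤ r11 := by rcases h11 with h|h <;> simp [h]
  have p12 : 0 ≤ r12 := by rcases h12 with h|h <;> simp [h]
  have p13 : 0 ≤ r13 := by rcases h13 with h|h <;> simp [h]
  have p14 : 0 ≤ r14 := by rcases h14 with h|h <;> simp [h]
  have p15 : 0 ≤ r15 := by rcases h15 with h|h <;> simp [h]
  have p16 : 0 ≤ r16 := by rcases h16 with h|h <;> simp [h]
  have p17 : 0 ≤ r17 := by rcases h17 with h|h <;> simp [h]
  have p18 : 0 ≤ r18 := by rcases h18 with h|h <;> simp [h]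
  have p19 : 0 ≤ r19 := by rcases h19 with h|h <;> simp [h]
  have p20 : 0 ≤ r20 := by rcases h20 with h|h <;> simp [h]
  have p21 : 0 ≤ r21 := by rcases h21 with h|h <;> simp [h]
  have p22 : 0 ≤ r22 := by rcases h22 with h|h <;> simp [h]
  have p23 : 0 ≤ r23 := by rcases h23 with h|h <;> simp [h]
  have p24 : 0 ≤ r24 := by rcases h24 with h|h <;> simp [h]
  have p25 : 0 ≤ r25 := by rcases h25 with h|h <;> simp [h]
  have p26 : 0 ≤ r26 := by rcases h26 with h|h <;> simp [h]
  have p27 : 0 ≤ r27 := by rcases h27 with h|h <;> simp [h]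
  have p28 : 0 ≤ r28 := by rcases h28 with h|h <;> simp [h]
  have p29 : 0 ≤ r29 := by rcases h29 with h|h <;> simp [h]
  have p30 : 0 ≤ r30 := by rcases h30 with h|h <;> simp [h]
  have p31 : 0 ≤ r31 := by rcases h31 with h|h <;> simp [h]
  have p32 : 0 ≤ r32 := by rcases h32 with h|h <;> simp [h]
  have p33 : 0 ≤ r33 := by rcases h33 with h|h <;> simp [h]
  have p34 : 0 ≤ r34 := by rcases h34 with h|h <;> simp [h]
  have p35 : 0 ≤ r35 := by rcases h35 with h|h <;> simp [h]
  have p36 : 0 ≤ r36 := by rcases h36 with h|h <;> simp [h]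
  have p37 : 0 ≤ r37 := by rcases h37 with h|h <;> simp [h]
  have p38 : 0 ≤ r38 := by rcases h38 with h|h <;> simp [h]
  have p39 : 0 ≤ r39 := by rcases h39 with h|h <;> simp [h]
  have p40 : 0 ≤ r40 := by rcases h40 with h|h <;> simp [h]
  have p41 : 0 ≤ r41 := by rcases h41 with h|h <;> simp [h]
  have p42 : 0 ≤ r42 := by rcases h42 with h|h <;> simp [h]
  have p43 : 0 ≤ r43 := by rcases h43 with h|h <;> simp [h]
  have p44 : 0 ≤ r44 := by rcases h44 with h|h <;> simp [h]
  have p45 : 0 ≤ r45 := by rcases h45 with h|h <;> simp [h]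
  have p46 : 0 ≤ r46 := by rcases h46 with h|h <;> simp [h]
  have p47 : 0 ≤ r47 := by rcases h47 with h|h <;> simp [h]
  have p48 : 0 ≤ r48 := by rcases h48 with h|h <;> simp [h]
  have p49 : 0 ≤ r49 := by rcases h49 with h|h <;> simp [h]
  have p50 : 0 ≤ r50 := by rcases h50 with h|h <;> simp [h]
  have p51 : 0 ≤ r51 := by rcases h51 with h|h <;> simp [h]
  have p52 : 0 ≤ r52 := by rcases h52 with h|h <;> simp [h]
  have p53 : 0 ≤ r53 := by rcases h53 with h|h <;> simp [h]
  have p54 : 0 ≤ r54 := by rcases h54 with h|h <;> simp [h]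
  have p55 : 0 ≤ r55 := by rcases h55 with h|h <;> simp [h]
  have p56 : 0 ≤ r56 := by rcases h56 with h|h <;> simp [h]
  have p57 : 0 ≤ r57 := by rcases h57 with h|h <;> simp [h]
  have p58 : 0 ≤ r58 := by rcases h58 with h|h <;> simp [h]
  rcases h26 with v26|v26
  ·
    rcases h3 with v3|v3
    ·
      rcases h20 with v20|v20
      ·
        have v22 : r22 = 1 := by linarith only [e9, v3, v20]
        have v8 : r8 = 0 := by linarith only [e20, v22, p45, p8]
        have v45 : r45 = 0 := by linarith only [e20, v8, v22, p45]
        have v10 : r10 = 0 := by linarith only [e22, v22, p25, p10]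
        have v25 : r25 = 0 := by linarith only [e22, v10, v22, p25]
        have v14 : r14 = 0 := by linarith only [e28, v22, p30, p14]
        have v30 : r30 = 0 := by linarith only [e28, v14, v22, p30]
        have v17 : r17 = 1 := by linarith only [e27, v14, v26]
        have v34 : r34 = 0 := by linarith only [e32, v17, p43, p34]
        have v43 : r43 = 0 := by linarith only [e32, v17, v34, p43]
        have v23 : r23 = 1 := by linarith only [e10, v3, v43]
        have v7 : r7 = 0 := by linarith only [e18, v17, p55, p7]
        have v55 : r55 = 0 := by linarith only [e18, v7, v17, p55]
        have v36 : r36 = 0 := by linarith only [e36, v23, p46, p36]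
        have v46 : r46 = 0 := by linarith only [e36, v23, v36, p46]
        have v41 : r41 = 0 := by linarith only [e37, v23, p49, p41]
        have v49 : r49 = 0 := by linarith only [e37, v23, v41, p49]
        rcases h21 with v21|v21
        ·
          have v0 : r0 = 1 := by linarith only [e0, v3, v21]
          have v15 : r15 = 0 := by linarith only [e1, v0, v26, p15]
          have v1 : r1 = 1 := by linarith only [e2, v7, v21]
          have v58 : r58 = 0 := by linarith only [e3, v1, v10, p58]
          have v31 : r31 = 0 := by linarith only [e4, v1, p51, p31]
          have v51 : r51 = 0 := by linarith only [e4, v1, v31, p51]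
          have v28 : r28 = 1 := by linarith only [e30, v15, v25]
          have v16 : r16 = 1 := by linarith only [e31, v20, v31]
          have v4 : r4 = 0 := by linarith only [e11, v16, v46, p4]
          have v42 : r42 = 1 := by linarith only [e12, v4, v25]
          have v6 : r6 = 0 := by linarith only [e17, v28, p53, p6]
          have v53 : r53 = 0 := by linarith only [e17, v6, v28, p53]
          have v13 : r13 = 0 := by linarith only [e25, v16, v26, p13]
          have v19 : r19 = 0 := by linarith only [e35, v42, p50, p19]
          have v50 : r50 = 0 := by linarith only [e35, v19, v42, p50]
          have v2 : r2 = 1 := by linarith only [e5, v4, v21]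
          have v47 : r47 = 0 := by linarith only [e6, v2, v14, p47]
          have v27 : r27 = 0 := by linarith only [e7, v2, v41, p27]
          have v44 : r44 = 1 := by linarith only [e8, v3, v19]
          have v5 : r5 = 1 := by linarith only [e13, v6, v21]
          have v11 : r11 = 0 := by linarith only [e14, v5, p57, p11]
          have v57 : r57 = 0 := by linarith only [e14, v5, v11, p57]
          have v52 : r52 = 0 := by linarith only [e15, v5, v30, p52]
          have v56 : r56 = 1 := by linarith only [e16, v6, v13]
          linarith only [e23, v11, v20, v27]
        ·
          have v0 : r0 = 0 := by linarith only [e0, v3, v21, p0]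
          have v15 : r15 = 1 := by linarith only [e1, v0, v26]
          have v1 : r1 = 0 := by linarith only [e2, v7, v21, p1]
          have v58 : r58 = 1 := by linarith only [e3, v1, v10]
          have v2 : r2 = 0 := by linarith only [e5, p4, v21, p2]
          have v4 : r4 = 0 := by linarith only [e5, v2, v21, p4]
          have v47 : r47 = 1 := by linarith only [e6, v2, v14]
          have v27 : r27 = 1 := by linarith only [e7, v2, v41]
          have v16 : r16 = 1 := by linarith only [e11, v4, v46]
          have v42 : r42 = 1 := by linarith only [e12, v4, v25]
          have v5 : r5 = 0 := by linarith only [e13, p6, v21, p5]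
          have v6 : r6 = 0 := by linarith only [e13, v5, v21, p6]
          have v52 : r52 = 1 := by linarith only [e15, v5, v30]
          have v11 : r11 = 0 := by linarith only [e23, v20, v27, p11]
          have v13 : r13 = 0 := by linarith only [e25, v16, v26, p13]
          linarith only [e29, v15, p24, v27]
      ·
        have v22 : r22 = 0 := by linarith only [e9, v3, v20, p22]
        have v9 : r9 = 0 := by linarith only [e21, v20, p48, p9]
        have v48 : r48 = 0 := by linarith only [e21, v9, v20, p48]
        have v11 : r11 = 0 := by linarith only [e23, v20, p27, p11]
        have v27 : r27 = 0 := by linarith only [e23, v11, v20, p27]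
        have v16 : r16 = 0 := by linarith only [e31, v20, p31, p16]
        have v31 : r31 = 0 := by linarith only [e31, v16, v20, p31]
        have v13 : r13 = 1 := by linarith only [e25, v16, v26]
        have v33 : r33 = 0 := by linarith only [e26, v13, p44, p33]
        have v44 : r44 = 0 := by linarith only [e26, v13, v33, p44]
        have v19 : r19 = 1 := by linarith only [e8, v3, v44]
        have v6 : r6 = 0 := by linarith only [e16, v13, p56, p6]
        have v56 : r56 = 0 := by linarith only [e16, v6, v13, p56]
        have v37 : r37 = 0 := by linarith only [e34, v19, p47, p37]
        have v47 : r47 = 0 := by linarith only [e34, v19, v37, p47]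
        have v42 : r42 = 0 := by linarith only [e35, v19, p50, p42]
        have v50 : r50 = 0 := by linarith only [e35, v19, v42, p50]
        rcases h21 with v21|v21
        ·
          have v0 : r0 = 1 := by linarith only [e0, v3, v21]
          have v15 : r15 = 0 := by linarith only [e1, v0, v26, p15]
          have v5 : r5 = 1 := by linarith only [e13, v6, v21]
          have v57 : r57 = 0 := by linarith only [e14, v5, v11, p57]
          have v30 : r30 = 0 := by linarith only [e15, v5, p52, p30]
          have v52 : r52 = 0 := by linarith only [e15, v5, v30, p52]
          have v14 : r14 = 1 := by linarith only [e28, v22, v30]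
          have v24 : r24 = 1 := by linarith only [e29, v15, v27]
          have v2 : r2 = 0 := by linarith only [e6, v14, v47, p2]
          have v41 : r41 = 1 := by linarith only [e7, v2, v27]
          have v7 : r7 = 0 := by linarith only [e19, v24, p54, p7]
          have v54 : r54 = 0 := by linarith only [e19, v7, v24, p54]
          have v17 : r17 = 0 := by linarith only [e27, v14, v26, p17]
          have v23 : r23 = 0 := by linarith only [e37, v41, p49, p23]
          have v49 : r49 = 0 := by linarith only [e37, v23, v41, p49]
          have v1 : r1 = 1 := by linarith only [e2, v7, v21]
          have v10 : r10 = 0 := by linarith only [e3, v1, p58, p10]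
          have v58 : r58 = 0 := by linarith only [e3, v1, v10, p58]
          have v51 : r51 = 0 := by linarith only [e4, v1, v31, p51]
          have v4 : r4 = 1 := by linarith only [e5, v2, v21]
          have v43 : r43 = 1 := by linarith only [e10, v3, v23]
          have v46 : r46 = 0 := by linarith only [e11, v4, v16, p46]
          have v25 : r25 = 0 := by linarith only [e12, v4, v42, p25]
          have v55 : r55 = 1 := by linarith only [e18, v7, v17]
          linarith only [e22, v10, v22, v25]
        ·
          have v0 : r0 = 0 := by linarith only [e0, v3, v21, p0]
          have v15 : r15 = 1 := by linarith only [e1, v0, v26]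
          have v1 : r1 = 0 := by linarith only [e2, p7, v21, p1]
          have v7 : r7 = 0 := by linarith only [e2, v1, v21, p7]
          have v51 : r51 = 1 := by linarith only [e4, v1, v31]
          have v2 : r2 = 0 := by linarith only [e5, p4, v21, p2]
          have v4 : r4 = 0 := by linarith only [e5, v2, v21, p4]
          have v14 : r14 = 1 := by linarith only [e6, v2, v47]
          have v41 : r41 = 1 := by linarith only [e7, v2, v27]
          have v46 : r46 = 1 := by linarith only [e11, v4, v16]
          have v25 : r25 = 1 := by linarith only [e12, v4, v42]
          have v5 : r5 = 0 := by linarith only [e13, v6, v21, p5]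
          have v57 : r57 = 1 := by linarith only [e14, v5, v11]
          have v10 : r10 = 0 := by linarith only [e22, v22, v25, p10]
          have v17 : r17 = 0 := by linarith only [e27, v14, v26, p17]
          have v30 : r30 = 0 := by linarith only [e28, v14, v22, p30]
          have v24 : r24 = 0 := by linarith only [e29, v15, v27, p24]
          linarith only [e30, v15, v25, p28]
    ·
      have v0 : r0 = 0 := by linarith only [e0, v3, p21, p0]
      have v21 : r21 = 0 := by linarith only [e0, v0, v3, p21]
      have v15 : r15 = 1 := by linarith only [e1, v0, v26]
      have v19 : r19 = 0 := by linarith only [e8, v3, p44, p19]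
      have v44 : r44 = 0 := by linarith only [e8, v3, v19, p44]
      have v20 : r20 = 0 := by linarith only [e9, v3, p22, p20]
      have v22 : r22 = 0 := by linarith only [e9, v3, v20, p22]
      have v23 : r23 = 0 := by linarith only [e10, v3, p43, p23]
      have v43 : r43 = 0 := by linarith only [e10, v3, v23, p43]
      have v24 : r24 = 0 := by linarith only [e29, v15, p27, p24]
      have v27 : r27 = 0 := by linarith only [e29, v15, v24, p27]
      have v25 : r25 = 0 := by linarith only [e30, v15, p28, p25]
      have v28 : r28 = 0 := by linarith only [e30, v15, v25, p28]
      have v10 : r10 = 1 := by linarith only [e22, v22, v25]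
      have v11 : r11 = 1 := by linarith only [e23, v20, v27]
      have v1 : r1 = 0 := by linarith only [e3, v10, p58, p1]
      have v58 : r58 = 0 := by linarith only [e3, v1, v10, p58]
      have v5 : r5 = 0 := by linarith only [e14, v11, p57, p5]
      have v57 : r57 = 0 := by linarith only [e14, v5, v11, p57]
      have v7 : r7 = 1 := by linarith only [e2, v1, v21]
      have v6 : r6 = 1 := by linarith only [e13, v5, v21]
      have v13 : r13 = 0 := by linarith only [e16, v6, p56, p13]
      have v56 : r56 = 0 := by linarith only [e16, v6, v13, p56]
      have v53 : r53 = 0 := by linarith only [e17, v6, v28, p53]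
      have v17 : r17 = 0 := by linarith only [e18, v7, p55, p17]
      have v55 : r55 = 0 := by linarith only [e18, v7, v17, p55]
      have v54 : r54 = 0 := by linarith only [e19, v7, v24, p54]
      have v16 : r16 = 1 := by linarith only [e25, v13, v26]
      have v33 : r33 = 1 := by linarith only [e26, v13, v44]
      have v14 : r14 = 1 := by linarith only [e27, v17, v26]
      have v30 : r30 = 0 := by linarith only [e28, v14, v22, p30]
      have v31 : r31 = 0 := by linarith only [e31, v16, v20, p31]
      have v34 : r34 = 1 := by linarith only [e32, v17, v43]
      have v51 : r51 = 1 := by linarith only [e4, v1, v31]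
      have v2 : r2 = 0 := by linarith only [e6, v14, p47, p2]
      have v47 : r47 = 0 := by linarith only [e6, v2, v14, p47]
      have v41 : r41 = 1 := by linarith only [e7, v2, v27]
      have v4 : r4 = 0 := by linarith only [e11, v16, p46, p4]
      have v46 : r46 = 0 := by linarith only [e11, v4, v16, p46]
      have v42 : r42 = 1 := by linarith only [e12, v4, v25]
      have v52 : r52 = 1 := by linarith only [e15, v5, v30]
      have v37 : r37 = 1 := by linarith only [e34, v19, v47]
      have v50 : r50 = 0 := by linarith only [e35, v19, v42, p50]
      have v36 : r36 = 1 := by linarith only [e36, v23, v46]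
      have v49 : r49 = 0 := by linarith only [e37, v23, v41, p49]
      linarith only [e5, v2, v4, v21]
  ·
    have v0 : r0 = 0 := by linarith only [e1, p15, v26, p0]
    have v15 : r15 = 0 := by linarith only [e1, v0, v26, p15]
    have v12 : r12 = 0 := by linarith only [e24, v26, p40, p12]
    have v40 : r40 = 0 := by linarith only [e24, v12, v26, p40]
    have v13 : r13 = 0 := by linarith only [e25, p16, v26, p13]
    have v16 : r16 = 0 := by linarith only [e25, v13, v26, p16]
    have v14 : r14 = 0 := by linarith only [e27, p17, v26, p14]
    have v17 : r17 = 0 := by linarith only [e27, v14, v26, p17]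
    have v18 : r18 = 0 := by linarith only [e33, v26, p39, p18]
    have v39 : r39 = 0 := by linarith only [e33, v18, v26, p39]
    rcases h3 with v3|v3
    ·
      have v21 : r21 = 1 := by linarith only [e0, v0, v3]
      have v1 : r1 = 0 := by linarith only [e2, p7, v21, p1]
      have v7 : r7 = 0 := by linarith only [e2, v1, v21, p7]
      have v2 : r2 = 0 := by linarith only [e5, p4, v21, p2]
      have v4 : r4 = 0 := by linarith only [e5, v2, v21, p4]
      have v47 : r47 = 1 := by linarith only [e6, v2, v14]
      have v46 : r46 = 1 := by linarith only [e11, v4, v16]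
      have v5 : r5 = 0 := by linarith only [e13, p6, v21, p5]
      have v6 : r6 = 0 := by linarith only [e13, v5, v21, p6]
      have v56 : r56 = 1 := by linarith only [e16, v6, v13]
      have v55 : r55 = 1 := by linarith only [e18, v7, v17]
      have v19 : r19 = 0 := by linarith only [e34, p37, v47, p19]
      have v37 : r37 = 0 := by linarith only [e34, v19, v47, p37]
      have v23 : r23 = 0 := by linarith only [e36, p36, v46, p23]
      have v36 : r36 = 0 := by linarith only [e36, v23, v46, p36]
      have v44 : r44 = 1 := by linarith only [e8, v3, v19]
      have v43 : r43 = 1 := by linarith only [e10, v3, v23]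
      have v33 : r33 = 0 := by linarith only [e26, v13, v44, p33]
      have v34 : r34 = 0 := by linarith only [e32, v17, v43, p34]
      have v29 : r29 = 0 := by linarith only [e38, p35, v44, p29]
      have v35 : r35 = 0 := by linarith only [e38, v29, v44, p35]
      have v48 : r48 = 1 := by linarith only [e39, v29, v39]
      have v32 : r32 = 0 := by linarith only [e40, p38, v43, p32]
      have v38 : r38 = 0 := by linarith only [e40, v32, v43, p38]
      have v45 : r45 = 1 := by linarith only [e41, v32, v40]
      have v8 : r8 = 0 := by linarith only [e20, p22, v45, p8]
      have v22 : r22 = 0 := by linarith only [e20, v8, v45, p22]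
      have v9 : r9 = 0 := by linarith only [e21, p20, v48, p9]
      have v20 : r20 = 0 := by linarith only [e21, v9, v48, p20]
      have v30 : r30 = 1 := by linarith only [e28, v14, v22]
      have v31 : r31 = 1 := by linarith only [e31, v16, v20]
      have v51 : r51 = 0 := by linarith only [e4, v1, v31, p51]
      linarith only [e9, v3, v20, v22]
    ·
      have v21 : r21 = 0 := by linarith only [e0, v0, v3, p21]
      have v19 : r19 = 0 := by linarith only [e8, v3, p44, p19]
      have v44 : r44 = 0 := by linarith only [e8, v3, v19, p44]
      have v20 : r20 = 0 := by linarith only [e9, v3, p22, p20]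
      have v22 : r22 = 0 := by linarith only [e9, v3, v20, p22]
      have v23 : r23 = 0 := by linarith only [e10, v3, p43, p23]
      have v43 : r43 = 0 := by linarith only [e10, v3, v23, p43]
      have v33 : r33 = 1 := by linarith only [e26, v13, v44]
      have v30 : r30 = 1 := by linarith only [e28, v14, v22]
      have v31 : r31 = 1 := by linarith only [e31, v16, v20]
      have v34 : r34 = 1 := by linarith only [e32, v17, v43]
      have v1 : r1 = 0 := by linarith only [e4, v31, p51, p1]
      have v51 : r51 = 0 := by linarith only [e4, v1, v31, p51]
      have v5 : r5 = 0 := by linarith only [e15, v30, p52, p5]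
      have v52 : r52 = 0 := by linarith only [e15, v5, v30, p52]
      have v7 : r7 = 1 := by linarith only [e2, v1, v21]
      have v6 : r6 = 1 := by linarith only [e13, v5, v21]
      have v56 : r56 = 0 := by linarith only [e16, v6, v13, p56]
      have v28 : r28 = 0 := by linarith only [e17, v6, p53, p28]
      have v53 : r53 = 0 := by linarith only [e17, v6, v28, p53]
      have v55 : r55 = 0 := by linarith only [e18, v7, v17, p55]
      have v24 : r24 = 0 := by linarith only [e19, v7, p54, p24]
      have v54 : r54 = 0 := by linarith only [e19, v7, v24, p54]
      have v27 : r27 = 1 := by linarith only [e29, v15, v24]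
      have v25 : r25 = 1 := by linarith only [e30, v15, v28]
      have v2 : r2 = 0 := by linarith only [e7, v27, p41, p2]
      have v41 : r41 = 0 := by linarith only [e7, v2, v27, p41]
      have v4 : r4 = 0 := by linarith only [e12, v25, p42, p4]
      have v42 : r42 = 0 := by linarith only [e12, v4, v25, p42]
      have v10 : r10 = 0 := by linarith only [e22, v22, v25, p10]
      have v11 : r11 = 0 := by linarith only [e23, v20, v27, p11]
      have v50 : r50 = 1 := by linarith only [e35, v19, v42]
      have v49 : r49 = 1 := by linarith only [e37, v23, v41]
      have v58 : r58 = 1 := by linarith only [e3, v1, v10]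
      linarith only [e5, v2, v4, v21]

noncomputable section
namespace KSaux
open scoped InnerProductSpace

variable {H : Type*} [NormedAddCommGroup H] [InnerProductSpace ℂ H] [CompleteSpace H]

/-- rank-one operator `x ↦ ⟪u, x⟫ • u`. -/
def rk (u : H) : H →L[ℂ] H := (innerSL ℂ u).smulRight u

lemma rk_apply (u x : H) : rk u x = ⟪u, x⟫_ℂ • u := rfl

lemma rk_sa (u : H) : IsSelfAdjoint (rk u) := by
  rw [ContinuousLinearMap.isSelfAdjoint_iff_isSymmetric]
  intro x y
  simp only [ContinuousLinearMap.coe_coe, rk_apply, inner_smul_left, inner_smul_right,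
    ← inner_conj_symm x u]
  ring

lemma rk_mul_orth {u v : H} (h : ⟪u, v⟫_ℂ = 0) : rk u * rk v = 0 := by
  ext x
  simp only [ContinuousLinearMap.mul_apply, rk_apply, inner_smul_right, h, mul_zero, zero_smul,
    smul_zero, ContinuousLinearMap.zero_apply]

lemma rk_idem {u : H} (h : ⟪u, u⟫_ℂ = 1) : rk u * rk u = rk u := by
  ext x
  simp only [ContinuousLinearMap.mul_apply, rk_apply, inner_smul_right, h, mul_one]

/-- the prediction-function property -/
def Pred (f : (H →L[ℂ] H) → ℝ) : Prop :=
  ∀ A : H →L[ℂ] H, IsSelfAdjoint A → ∀ g : ℝ → ℝ, Continuous g → f (cfc g A) = g (f A)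

variable {f : (H →L[ℂ] H) → ℝ}

lemma f_zero (hf : Pred f) : f 0 = 0 := by
  have h := hf 0 (by simp) (fun _ => 0) continuous_const
  rwa [show (fun _ : ℝ => (0:ℝ)) = (0 : ℝ → ℝ) from rfl, cfc_zero] at h

lemma f_one (hf : Pred f) : f 1 = 1 := by
  have h := hf 1 (IsSelfAdjoint.one (R := H →L[ℂ] H)) (fun t => t - 1) (by continuity)
  rw [cfc_sub (fun t : ℝ => t) (fun _ : ℝ => (1:ℝ)) (1 : H →L[ℂ] H),
    cfc_id' ℝ (1 : H →L[ℂ] H) (IsSelfAdjoint.one (R := H →L[ℂ] H)),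
    cfc_const 1 (1 : H →L[ℂ] H) (IsSelfAdjoint.one (R := H →L[ℂ] H)), map_one, sub_self,
    f_zero hf] at h
  have h' : 0 = f 1 - 1 := h
  linarith

lemma f_proj (hf : Pred f) {P : H →L[ℂ] H} (hP : IsSelfAdjoint P) (hP2 : P * P = P) :
    f P = 0 ∨ f P = 1 := by
  have h := hf P hP (fun t => t * t - t) (by continuity)
  rw [cfc_sub (fun t : ℝ => t * t) (fun t : ℝ => t) P,
    cfc_mul (fun t : ℝ => t) (fun t : ℝ => t) P,
    cfc_id' ℝ P hP, hP2, sub_self, f_zero hf] at h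
  have h' : 0 = f P * f P - f P := h
  have h2 : f P * (f P - 1) = 0 := by linear_combination -h'
  rcases mul_eq_zero.mp h2 with h3 | h3
  · exact Or.inl h3
  · exact Or.inr (by linarith)

lemma f_add (hf : Pred f) {P Q : H →L[ℂ] H} (hP : IsSelfAdjoint P) (hQ : IsSelfAdjoint Q)
    (hP2 : P * P = P) (hQ2 : Q * Q = Q) (hPQ : P * Q = 0) (hQP : Q * P = 0) :
    f (P + Q) = f P + f Q := by
  set A : H →L[ℂ] H := P + (Q + Q) with hA
  have hAsa : IsSelfAdjoint A := hP.add (hQ.add hQ)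
  have hA2 : A * A = P + (Q + Q + Q + Q) := by
    rw [hA]
    simp only [mul_add, add_mul, hP2, hQ2, hPQ, hQP]
    abel
  have e1 : cfc (fun t : ℝ => (t + t) - t * t) A = P := by
    rw [cfc_sub (fun t : ℝ => t + t) (fun t : ℝ => t * t) A,
      cfc_add A (fun t : ℝ => t) (fun t : ℝ => t),
      cfc_mul (fun t : ℝ => t) (fun t : ℝ => t) A, cfc_id' ℝ A hAsa, hA2]
    rw [hA]; abel
  have e2 : cfc (fun t : ℝ => (1/2 : ℝ) • (t * t - t)) A = Q := by
    rw [cfc_smul (1/2 : ℝ) (fun t : ℝ => t * t - t) A,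
      cfc_sub (fun t : ℝ => t * t) (fun t : ℝ => t) A,
      cfc_mul (fun t : ℝ => t) (fun t : ℝ => t) A, cfc_id' ℝ A hAsa, hA2,
      show P + (Q + Q + Q + Q) - A = Q + Q by rw [hA]; abel,
      smul_add, ← add_smul]
    norm_num
  have e12 : cfc (fun t : ℝ => ((t + t) - t * t) + (1/2 : ℝ) • (t * t - t)) A = P + Q := by
    rw [cfc_add A (fun t : ℝ => (t + t) - t * t) (fun t : ℝ => (1/2 : ℝ) • (t * t - t)),
      e1, e2]
  have h1 := hf A hAsa (fun t => (t + t) - t * t) (by continuity)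
  have h2 := hf A hAsa (fun t => (1/2 : ℝ) • (t * t - t)) (by fun_prop)
  have h12 := hf A hAsa (fun t => ((t + t) - t * t) + (1/2 : ℝ) • (t * t - t)) (by fun_prop)
  rw [e1] at h1; rw [e2] at h2; rw [e12] at h12
  have h1' : f P = (f A + f A) - f A * f A := h1
  have h2' : f Q = (1/2 : ℝ) * (f A * f A - f A) := h2
  have h12' : f (P + Q) = ((f A + f A) - f A * f A) + (1/2 : ℝ) * (f A * f A - f A) := h12
  rw [h12', h1', h2']

def dt (x y : Fin 3 → ℝ) : ℝ := x 0 * y 0 + x 1 * y 1 + x 2 * y 2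

def vec (u : Fin 3 → H) (x : Fin 3 → ℝ) : H :=
  (x 0 : ℂ) • u 0 + (x 1 : ℂ) • u 1 + (x 2 : ℂ) • u 2

/-- normalized vector associated to real coordinates `x` -/
def nv (u : Fin 3 → H) (x : Fin 3 → ℝ) : H := vec u ((Real.sqrt (dt x x))⁻¹ • x)

variable {u : Fin 3 → H}

lemma on_inner (hu : Orthonormal ℂ u) :
    ⟪u 0, u 0⟫_ℂ = 1 ∧ ⟪u 1, u 1⟫_ℂ = 1 ∧ ⟪u 2, u 2⟫_ℂ = 1 ∧
    ⟪u 0, u 1⟫_ℂ = 0 ∧ ⟪u 0, u 2⟫_ℂ = 0 ∧ ⟪u 1, u 2⟫_ℂ = 0 ∧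
    ⟪u 1, u 0⟫_ℂ = 0 ∧ ⟪u 2, u 0⟫_ℂ = 0 ∧ ⟪u 2, u 1⟫_ℂ = 0 := by
  have h := orthonormal_iff_ite.mp hu
  refine ⟨?_, ?_, ?_, ?_, ?_, ?_, ?_, ?_, ?_⟩ <;>
    [have := h 0 0; have := h 1 1; have := h 2 2; have := h 0 1; have := h 0 2; have := h 1 2;
     have := h 1 0; have := h 2 0; have := h 2 1] <;>
    first
      | (rwa [if_pos rfl] at this)
      | (rwa [if_neg (by decide)] at this)

lemma inner_vec (hu : Orthonormal ℂ u) (x y : Fin 3 → ℝ) :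
    ⟪vec u x, vec u y⟫_ℂ = (dt x y : ℂ) := by
  obtain ⟨h00, h11, h22, h01, h02, h12, h10, h20, h21⟩ := on_inner hu
  simp only [vec, dt, inner_add_left, inner_add_right, inner_smul_left, inner_smul_right,
    h00, h11, h22, h01, h02, h12, h10, h20, h21, Complex.conj_ofReal]
  push_cast
  ring

lemma sum_rk_eq (x y z : Fin 3 → ℝ)
    (hxx : dt x x = 1) (hyy : dt y y = 1) (hzz : dt z z = 1)
    (hxy : dt x y = 0) (hxz : dt x z = 0) (hyz : dt y z = 0) :
    rk (vec u x) + rk (vec u y) + rk (vec u z) = rk (u 0) + rk (u 1) + rk (u 2) := by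
  simp only [dt] at hxx hyy hzz hxy hxz hyz
  set X : Matrix (Fin 3) (Fin 3) ℝ :=
    !![x 0, x 1, x 2; y 0, y 1, y 2; z 0, z 1, z 2] with hX
  set Y : Matrix (Fin 3) (Fin 3) ℝ :=
    !![x 0, y 0, z 0; x 1, y 1, z 1; x 2, y 2, z 2] with hY
  have hrow : X * Y = 1 := by
    ext i j
    fin_cases i <;> fin_cases j <;>
      simp [hX, hY, Matrix.mul_apply, Fin.sum_univ_three, Matrix.one_apply] <;> linarith
  have hcol : Y * X = 1 := mul_eq_one_comm.mp hrow
  have c00 : x 0 * x 0 + y 0 * y 0 + z 0 * z 0 = 1 := by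
    simpa [Matrix.mul_apply, Fin.sum_univ_three, hX, hY, Matrix.one_apply] using
      congrFun (congrFun hcol 0) 0
  have c11 : x 1 * x 1 + y 1 * y 1 + z 1 * z 1 = 1 := by
    simpa [Matrix.mul_apply, Fin.sum_univ_three, hX, hY, Matrix.one_apply] using
      congrFun (congrFun hcol 1) 1
  have c22 : x 2 * x 2 + y 2 * y 2 + z 2 * z 2 = 1 := by
    simpa [Matrix.mul_apply, Fin.sum_univ_three, hX, hY, Matrix.one_apply] using
      congrFun (congrFun hcol 2) 2
  have c01 : x 0 * x 1 + y 0 * y 1 + z 0 * z 1 = 0 := by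
    simpa [Matrix.mul_apply, Fin.sum_univ_three, hX, hY, Matrix.one_apply] using
      congrFun (congrFun hcol 0) 1
  have c02 : x 0 * x 2 + y 0 * y 2 + z 0 * z 2 = 0 := by
    simpa [Matrix.mul_apply, Fin.sum_univ_three, hX, hY, Matrix.one_apply] using
      congrFun (congrFun hcol 0) 2
  have c12 : x 1 * x 2 + y 1 * y 2 + z 1 * z 2 = 0 := by
    simpa [Matrix.mul_apply, Fin.sum_univ_three, hX, hY, Matrix.one_apply] using
      congrFun (congrFun hcol 1) 2
  have C00 : ((x 0 : ℂ) * x 0 + y 0 * y 0 + z 0 * z 0) = 1 := by exact_mod_cast congrArg Complex.ofReal c00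
  have C11 : ((x 1 : ℂ) * x 1 + y 1 * y 1 + z 1 * z 1) = 1 := by exact_mod_cast congrArg Complex.ofReal c11
  have C22 : ((x 2 : ℂ) * x 2 + y 2 * y 2 + z 2 * z 2) = 1 := by exact_mod_cast congrArg Complex.ofReal c22
  have C01 : ((x 0 : ℂ) * x 1 + y 0 * y 1 + z 0 * z 1) = 0 := by exact_mod_cast congrArg Complex.ofReal c01
  have C02 : ((x 0 : ℂ) * x 2 + y 0 * y 2 + z 0 * z 2) = 0 := by exact_mod_cast congrArg Complex.ofReal c02
  have C12 : ((x 1 : ℂ) * x 2 + y 1 * y 2 + z 1 * z 2) = 0 := by exact_mod_cast congrArg Complex.ofReal c12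
  ext w
  simp only [ContinuousLinearMap.add_apply, rk_apply, vec, inner_add_left, inner_smul_left,
    Complex.conj_ofReal]
  match_scalars
  · linear_combination ⟪u 0, w⟫_ℂ * C00 + ⟪u 1, w⟫_ℂ * C01 + ⟪u 2, w⟫_ℂ * C02
  · linear_combination ⟪u 0, w⟫_ℂ * C01 + ⟪u 1, w⟫_ℂ * C11 + ⟪u 2, w⟫_ℂ * C12
  · linear_combination ⟪u 0, w⟫_ℂ * C02 + ⟪u 1, w⟫_ℂ * C12 + ⟪u 2, w⟫_ℂ * C22

lemma dt_smul (a b : ℝ) (x y : Fin 3 → ℝ) : dt (a • x) (b • y) = a * b * dt x y := by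
  simp only [dt, Pi.smul_apply, smul_eq_mul]
  ring

lemma dt_pos {x : Fin 3 → ℝ} (hx : dt x x ≠ 0) : 0 < dt x x := by
  rcases lt_or_eq_of_le (show (0:ℝ) ≤ dt x x by
    simp only [dt]; nlinarith [sq_nonneg (x 0), sq_nonneg (x 1), sq_nonneg (x 2)]) with h | h
  · exact h
  · exact absurd h.symm hx

lemma dt_nv_self {x : Fin 3 → ℝ} (hx : dt x x ≠ 0) :
    dt ((Real.sqrt (dt x x))⁻¹ • x) ((Real.sqrt (dt x x))⁻¹ • x) = 1 := by
  have h := dt_pos hx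
  have hs : Real.sqrt (dt x x) ≠ 0 := ne_of_gt (Real.sqrt_pos.mpr h)
  rw [dt_smul]
  have h2 := Real.mul_self_sqrt h.le
  field_simp
  rw [Real.sq_sqrt h.le]

lemma dt_nv_orth {x y : Fin 3 → ℝ} (hxy : dt x y = 0) :
    dt ((Real.sqrt (dt x x))⁻¹ • x) ((Real.sqrt (dt y y))⁻¹ • y) = 0 := by
  rw [dt_smul, hxy, mul_zero]

lemma nv_inner_self (hu : Orthonormal ℂ u) {x : Fin 3 → ℝ} (hx : dt x x ≠ 0) :
    ⟪nv u x, nv u x⟫_ℂ = 1 := by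
  rw [nv, inner_vec hu, dt_nv_self hx]
  norm_num

lemma nv_inner_orth (hu : Orthonormal ℂ u) {x y : Fin 3 → ℝ} (hxy : dt x y = 0) :
    ⟪nv u x, nv u y⟫_ℂ = 0 := by
  rw [nv, nv, inner_vec hu, dt_nv_orth hxy]
  norm_num

lemma dt_symm (x y : Fin 3 → ℝ) : dt x y = dt y x := by simp only [dt]; ring

lemma proj01 (hf : Pred f) (hu : Orthonormal ℂ u) {x : Fin 3 → ℝ} (hx : dt x x ≠ 0) :
    f (rk (nv u x)) = 0 ∨ f (rk (nv u x)) = 1 :=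
  f_proj hf (rk_sa _) (rk_idem (nv_inner_self hu hx))

lemma triple_sum (hf : Pred f) (hu : Orthonormal ℂ u) {x y z : Fin 3 → ℝ}
    (hx : dt x x ≠ 0) (hy : dt y y ≠ 0) (hz : dt z z ≠ 0)
    (hxy : dt x y = 0) (hxz : dt x z = 0) (hyz : dt y z = 0) :
    f (rk (nv u x)) + f (rk (nv u y)) + f (rk (nv u z))
      = f (rk (u 0) + rk (u 1) + rk (u 2)) := by
  have hyx : dt y x = 0 := (dt_symm x y) ▸ hxy
  have hzx : dt z x = 0 := (dt_symm x z) ▸ hxz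
  have hzy : dt z y = 0 := (dt_symm y z) ▸ hyz
  set X := rk (nv u x); set Y := rk (nv u y); set Z := rk (nv u z)
  have hXi : X * X = X := rk_idem (nv_inner_self hu hx)
  have hYi : Y * Y = Y := rk_idem (nv_inner_self hu hy)
  have hZi : Z * Z = Z := rk_idem (nv_inner_self hu hz)
  have hXY : X * Y = 0 := rk_mul_orth (nv_inner_orth hu hxy)
  have hYX : Y * X = 0 := rk_mul_orth (nv_inner_orth hu hyx)
  have hXZ : X * Z = 0 := rk_mul_orth (nv_inner_orth hu hxz)
  have hZX : Z * X = 0 := rk_mul_orth (nv_inner_orth hu hzx)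
  have hYZ : Y * Z = 0 := rk_mul_orth (nv_inner_orth hu hyz)
  have hZY : Z * Y = 0 := rk_mul_orth (nv_inner_orth hu hzy)
  have h1 : f (X + Y) = f X + f Y := f_add hf (rk_sa _) (rk_sa _) hXi hYi hXY hYX
  have hXYi : (X + Y) * (X + Y) = X + Y := by
    rw [mul_add, add_mul, add_mul, hXi, hYi, hXY, hYX]; abel
  have hXYZ : (X + Y) * Z = 0 := by rw [add_mul, hXZ, hYZ, add_zero]
  have hZXY : Z * (X + Y) = 0 := by rw [mul_add, hZX, hZY, add_zero]
  have h2 : f (X + Y + Z) = f (X + Y) + f Z :=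
    f_add hf ((rk_sa _).add (rk_sa _)) (rk_sa _) hXYi hZi hXYZ hZXY
  have h3 : X + Y + Z = rk (u 0) + rk (u 1) + rk (u 2) := by
    exact sum_rk_eq _ _ _ (dt_nv_self hx) (dt_nv_self hy) (dt_nv_self hz)
      (dt_nv_orth hxy) (dt_nv_orth hxz) (dt_nv_orth hyz)
  rw [← h3, h2, h1]




lemma PS_facts (hu : Orthonormal ℂ u) :
    IsSelfAdjoint (rk (u 0) + rk (u 1) + rk (u 2)) ∧
    (rk (u 0) + rk (u 1) + rk (u 2)) * (rk (u 0) + rk (u 1) + rk (u 2))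
      = rk (u 0) + rk (u 1) + rk (u 2) := by
  obtain ⟨h00, h11, h22, h01, h02, h12, h10, h20, h21⟩ := on_inner hu
  constructor
  · exact ((rk_sa (u 0)).add (rk_sa (u 1))).add (rk_sa (u 2))
  · simp only [mul_add, add_mul, rk_idem h00, rk_idem h11, rk_idem h22,
      rk_mul_orth h01, rk_mul_orth h02, rk_mul_orth h12,
      rk_mul_orth h10, rk_mul_orth h20, rk_mul_orth h21]
    abel

lemma PS_split (hf : Pred f) (hu : Orthonormal ℂ u) :
    f (rk (u 0) + rk (u 1) + rk (u 2)) = f (rk (u 0)) + f (rk (u 1)) + f (rk (u 2)) := by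
  obtain ⟨h00, h11, h22, h01, h02, h12, h10, h20, h21⟩ := on_inner hu
  have h1 : f (rk (u 0) + rk (u 1)) = f (rk (u 0)) + f (rk (u 1)) :=
    f_add hf (rk_sa _) (rk_sa _) (rk_idem h00) (rk_idem h11) (rk_mul_orth h01) (rk_mul_orth h10)
  have hXYi : (rk (u 0) + rk (u 1)) * (rk (u 0) + rk (u 1)) = rk (u 0) + rk (u 1) := by
    rw [mul_add, add_mul, add_mul, rk_idem h00, rk_idem h11, rk_mul_orth h01, rk_mul_orth h10]
    abel
  have hXYZ : (rk (u 0) + rk (u 1)) * rk (u 2) = 0 := by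
    rw [add_mul, rk_mul_orth h02, rk_mul_orth h12, add_zero]
  have hZXY : rk (u 2) * (rk (u 0) + rk (u 1)) = 0 := by
    rw [mul_add, rk_mul_orth h20, rk_mul_orth h21, add_zero]
  have h2 : f (rk (u 0) + rk (u 1) + rk (u 2)) = f (rk (u 0) + rk (u 1)) + f (rk (u 2)) :=
    f_add hf ((rk_sa _).add (rk_sa _)) (rk_sa _) hXYi (rk_idem h22) hXYZ hZXY
  rw [h2, h1]


end KSaux

end

noncomputable section

variable {H : Type*} [NormedAddCommGroup H] [InnerProductSpace ℂ H] [FiniteDimensional ℂ H]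

/-- In dimension at least `3` there is no prediction function: no real-valued function
`f` on the self-adjoint bounded operators of `H` satisfies the functionality condition
`f (g A) = g (f A)` for every self-adjoint `A` and every continuous `g : ℝ → ℝ`
(applied to `A` via the continuous functional calculus). -/
theorem no_prediction_function (hdim : 3 ≤ Module.finrank ℂ H) :
    ¬ ∃ f : (H →L[ℂ] H) → ℝ,
        ∀ A : H →L[ℂ] H, IsSelfAdjoint A →
          ∀ g : ℝ → ℝ, Continuous g → f (cfc g A) = g (f A) := by
  rintro ⟨f, hfr⟩
  have : CompleteSpace H := FiniteDimensional.complete ℂ H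
  have hf : KSaux.Pred f := hfr
  -- orthonormal triple u with f (KSaux.rk (u 0)) = 1
  obtain ⟨u, hu, hu0⟩ : ∃ u : Fin 3 → H, Orthonormal ℂ u ∧ f (KSaux.rk (u 0)) = 1 := by
    set b := stdOrthonormalBasis ℂ H with hb_def
    have hb := b.orthonormal
    have hbi := orthonormal_iff_ite.mp hb
    have rkmul : ∀ i j, i ≠ j → KSaux.rk (b i) * KSaux.rk (b j) = 0 := fun i j hij =>
      KSaux.rk_mul_orth (by have := hbi i j; rwa [if_neg hij] at this)
    have rkidem : ∀ i, KSaux.rk (b i) * KSaux.rk (b i) = KSaux.rk (b i) := fun i =>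
      KSaux.rk_idem (by have := hbi i i; rwa [if_pos rfl] at this)
    have key : ∀ s : Finset (Fin (Module.finrank ℂ H)),
        IsSelfAdjoint (∑ i ∈ s, KSaux.rk (b i)) ∧
        (∑ i ∈ s, KSaux.rk (b i)) * (∑ i ∈ s, KSaux.rk (b i)) = (∑ i ∈ s, KSaux.rk (b i)) ∧
        f (∑ i ∈ s, KSaux.rk (b i)) = ∑ i ∈ s, f (KSaux.rk (b i)) := by
      intro s
      induction s using Finset.induction_on with
      | empty => refine ⟨by simp, by simp, by simp [KSaux.f_zero hf]⟩
      | @insert a s ha ih =>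
        have hm1 : KSaux.rk (b a) * (∑ i ∈ s, KSaux.rk (b i)) = 0 := by
          rw [Finset.mul_sum]
          exact Finset.sum_eq_zero fun i hi => rkmul a i (fun h => ha (h ▸ hi))
        have hm2 : (∑ i ∈ s, KSaux.rk (b i)) * KSaux.rk (b a) = 0 := by
          rw [Finset.sum_mul]
          exact Finset.sum_eq_zero fun i hi => rkmul i a (fun h => ha (h ▸ hi))
        refine ⟨?_, ?_, ?_⟩
        · rw [Finset.sum_insert ha]
          exact (KSaux.rk_sa _).add ih.1
        · rw [Finset.sum_insert ha, mul_add, add_mul, add_mul, rkidem a, ih.2.1, hm1, hm2]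
          abel
        · rw [Finset.sum_insert ha, Finset.sum_insert ha,
            KSaux.f_add hf (KSaux.rk_sa _) ih.1 (rkidem a) ih.2.1 hm1 hm2, ih.2.2]
    have hone : (∑ i, KSaux.rk (b i)) = 1 := by
      ext w
      rw [ContinuousLinearMap.sum_apply]
      simp only [KSaux.rk_apply, ContinuousLinearMap.one_apply]
      exact b.sum_repr' w
    have hsumf : (1:ℝ) = ∑ i, f (KSaux.rk (b i)) := by
      rw [← (key Finset.univ).2.2, hone, KSaux.f_one hf]
    obtain ⟨j, hj⟩ : ∃ j, f (KSaux.rk (b j)) = 1 := by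
      by_contra hno
      push_neg at hno
      have hall : ∀ i, f (KSaux.rk (b i)) = 0 := fun i =>
        (KSaux.f_proj hf (KSaux.rk_sa _) (rkidem i)).resolve_right (hno i)
      rw [Finset.sum_congr rfl (fun i _ => hall i), Finset.sum_const_zero] at hsumf
      norm_num at hsumf
    have h0 : 0 < Module.finrank ℂ H := by omega
    set i0 : Fin (Module.finrank ℂ H) := ⟨0, h0⟩ with hi0
    set σ := Equiv.swap j i0 with hσ
    refine ⟨fun k => b (σ ⟨k.1, by omega⟩), hb.comp _ ?_, ?_⟩
    · intro k l hkl
      have := σ.injective hkl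
      rw [Fin.mk.injEq] at this
      exact Fin.ext this
    · show f (KSaux.rk (b (σ ⟨(0:Fin 3).1, _⟩))) = 1
      have h00 : (⟨(0:Fin 3).1, by omega⟩ : Fin (Module.finrank ℂ H)) = i0 := rfl
      rw [h00, hσ, Equiv.swap_apply_right, hj]
  -- value of f on the 3-dim subspace projection
  have hsplit := KSaux.PS_split hf hu
  obtain ⟨h00, h11, h22, h01, h02, h12, h10, h20, h21⟩ := KSaux.on_inner hu
  have t1 := KSaux.f_proj hf (KSaux.rk_sa (u 1)) (KSaux.rk_idem h11)
  have t2 := KSaux.f_proj hf (KSaux.rk_sa (u 2)) (KSaux.rk_idem h22)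
  have tPS := KSaux.f_proj hf (KSaux.PS_facts hu).1 (KSaux.PS_facts hu).2
  have hfPS1 : f (KSaux.rk (u 0) + KSaux.rk (u 1) + KSaux.rk (u 2)) = 1 := by
    rcases t1 with h1 | h1 <;> rcases t2 with h2 | h2 <;> rcases tPS with h3 | h3 <;>
      rw [hsplit, hu0] at * <;> linarith

  have hB0 : KSaux.dt (![0,0,1] : Fin 3 → ℝ) ![0,0,1] ≠ 0 := by norm_num [KSaux.dt, Matrix.cons_val_two, Matrix.tail_cons, Matrix.head_cons]
  have h0 : f (KSaux.rk (KSaux.nv u ![0,0,1])) = 0 ∨ f (KSaux.rk (KSaux.nv u ![0,0,1])) = 1 := KSaux.proj01 hf hu hB0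
  have hB1 : KSaux.dt (![0,1,-2] : Fin 3 → ℝ) ![0,1,-2] ≠ 0 := by norm_num [KSaux.dt, Matrix.cons_val_two, Matrix.tail_cons, Matrix.head_cons]
  have h1 : f (KSaux.rk (KSaux.nv u ![0,1,-2])) = 0 ∨ f (KSaux.rk (KSaux.nv u ![0,1,-2])) = 1 := KSaux.proj01 hf hu hB1
  have hB2 : KSaux.dt (![0,1,-1] : Fin 3 → ℝ) ![0,1,-1] ≠ 0 := by norm_num [KSaux.dt, Matrix.cons_val_two, Matrix.tail_cons, Matrix.head_cons]
  have h2 : f (KSaux.rk (KSaux.nv u ![0,1,-1])) = 0 ∨ f (KSaux.rk (KSaux.nv u ![0,1,-1])) = 1 := KSaux.proj01 hf hu hB2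
  have hB3 : KSaux.dt (![0,1,0] : Fin 3 → ℝ) ![0,1,0] ≠ 0 := by norm_num [KSaux.dt, Matrix.cons_val_two, Matrix.tail_cons, Matrix.head_cons]
  have h3 : f (KSaux.rk (KSaux.nv u ![0,1,0])) = 0 ∨ f (KSaux.rk (KSaux.nv u ![0,1,0])) = 1 := KSaux.proj01 hf hu hB3
  have hB4 : KSaux.dt (![0,1,1] : Fin 3 → ℝ) ![0,1,1] ≠ 0 := by norm_num [KSaux.dt, Matrix.cons_val_two, Matrix.tail_cons, Matrix.head_cons]
  have h4 : f (KSaux.rk (KSaux.nv u ![0,1,1])) = 0 ∨ f (KSaux.rk (KSaux.nv u ![0,1,1])) = 1 := KSaux.proj01 hf hu hB4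
  have hB5 : KSaux.dt (![0,1,2] : Fin 3 → ℝ) ![0,1,2] ≠ 0 := by norm_num [KSaux.dt, Matrix.cons_val_two, Matrix.tail_cons, Matrix.head_cons]
  have h5 : f (KSaux.rk (KSaux.nv u ![0,1,2])) = 0 ∨ f (KSaux.rk (KSaux.nv u ![0,1,2])) = 1 := KSaux.proj01 hf hu hB5
  have hB6 : KSaux.dt (![0,2,-1] : Fin 3 → ℝ) ![0,2,-1] ≠ 0 := by norm_num [KSaux.dt, Matrix.cons_val_two, Matrix.tail_cons, Matrix.head_cons]
  have h6 : f (KSaux.rk (KSaux.nv u ![0,2,-1])) = 0 ∨ f (KSaux.rk (KSaux.nv u ![0,2,-1])) = 1 := KSaux.proj01 hf hu hB6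
  have hB7 : KSaux.dt (![0,2,1] : Fin 3 → ℝ) ![0,2,1] ≠ 0 := by norm_num [KSaux.dt, Matrix.cons_val_two, Matrix.tail_cons, Matrix.head_cons]
  have h7 : f (KSaux.rk (KSaux.nv u ![0,2,1])) = 0 ∨ f (KSaux.rk (KSaux.nv u ![0,2,1])) = 1 := KSaux.proj01 hf hu hB7
  have hB8 : KSaux.dt (![1,-4,-1] : Fin 3 → ℝ) ![1,-4,-1] ≠ 0 := by norm_num [KSaux.dt, Matrix.cons_val_two, Matrix.tail_cons, Matrix.head_cons]
  have h8 : f (KSaux.rk (KSaux.nv u ![1,-4,-1])) = 0 ∨ f (KSaux.rk (KSaux.nv u ![1,-4,-1])) = 1 := KSaux.proj01 hf hu hB8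
  have hB9 : KSaux.dt (![1,-4,1] : Fin 3 → ℝ) ![1,-4,1] ≠ 0 := by norm_num [KSaux.dt, Matrix.cons_val_two, Matrix.tail_cons, Matrix.head_cons]
  have h9 : f (KSaux.rk (KSaux.nv u ![1,-4,1])) = 0 ∨ f (KSaux.rk (KSaux.nv u ![1,-4,1])) = 1 := KSaux.proj01 hf hu hB9
  have hB10 : KSaux.dt (![1,-2,-1] : Fin 3 → ℝ) ![1,-2,-1] ≠ 0 := by norm_num [KSaux.dt, Matrix.cons_val_two, Matrix.tail_cons, Matrix.head_cons]
  have h10 : f (KSaux.rk (KSaux.nv u ![1,-2,-1])) = 0 ∨ f (KSaux.rk (KSaux.nv u ![1,-2,-1])) = 1 := KSaux.proj01 hf hu hB10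
  have hB11 : KSaux.dt (![1,-2,1] : Fin 3 → ℝ) ![1,-2,1] ≠ 0 := by norm_num [KSaux.dt, Matrix.cons_val_two, Matrix.tail_cons, Matrix.head_cons]
  have h11 : f (KSaux.rk (KSaux.nv u ![1,-2,1])) = 0 ∨ f (KSaux.rk (KSaux.nv u ![1,-2,1])) = 1 := KSaux.proj01 hf hu hB11
  have hB12 : KSaux.dt (![1,-1,-4] : Fin 3 → ℝ) ![1,-1,-4] ≠ 0 := by norm_num [KSaux.dt, Matrix.cons_val_two, Matrix.tail_cons, Matrix.head_cons]
  have h12 : f (KSaux.rk (KSaux.nv u ![1,-1,-4])) = 0 ∨ f (KSaux.rk (KSaux.nv u ![1,-1,-4])) = 1 := KSaux.proj01 hf hu hB12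
  have hB13 : KSaux.dt (![1,-1,-2] : Fin 3 → ℝ) ![1,-1,-2] ≠ 0 := by norm_num [KSaux.dt, Matrix.cons_val_two, Matrix.tail_cons, Matrix.head_cons]
  have h13 : f (KSaux.rk (KSaux.nv u ![1,-1,-2])) = 0 ∨ f (KSaux.rk (KSaux.nv u ![1,-1,-2])) = 1 := KSaux.proj01 hf hu hB13
  have hB14 : KSaux.dt (![1,-1,-1] : Fin 3 → ℝ) ![1,-1,-1] ≠ 0 := by norm_num [KSaux.dt, Matrix.cons_val_two, Matrix.tail_cons, Matrix.head_cons]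
  have h14 : f (KSaux.rk (KSaux.nv u ![1,-1,-1])) = 0 ∨ f (KSaux.rk (KSaux.nv u ![1,-1,-1])) = 1 := KSaux.proj01 hf hu hB14
  have hB15 : KSaux.dt (![1,-1,0] : Fin 3 → ℝ) ![1,-1,0] ≠ 0 := by norm_num [KSaux.dt, Matrix.cons_val_two, Matrix.tail_cons, Matrix.head_cons]
  have h15 : f (KSaux.rk (KSaux.nv u ![1,-1,0])) = 0 ∨ f (KSaux.rk (KSaux.nv u ![1,-1,0])) = 1 := KSaux.proj01 hf hu hB15
  have hB16 : KSaux.dt (![1,-1,1] : Fin 3 → ℝ) ![1,-1,1] ≠ 0 := by norm_num [KSaux.dt, Matrix.cons_val_two, Matrix.tail_cons, Matrix.head_cons]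
  have h16 : f (KSaux.rk (KSaux.nv u ![1,-1,1])) = 0 ∨ f (KSaux.rk (KSaux.nv u ![1,-1,1])) = 1 := KSaux.proj01 hf hu hB16
  have hB17 : KSaux.dt (![1,-1,2] : Fin 3 → ℝ) ![1,-1,2] ≠ 0 := by norm_num [KSaux.dt, Matrix.cons_val_two, Matrix.tail_cons, Matrix.head_cons]
  have h17 : f (KSaux.rk (KSaux.nv u ![1,-1,2])) = 0 ∨ f (KSaux.rk (KSaux.nv u ![1,-1,2])) = 1 := KSaux.proj01 hf hu hB17
  have hB18 : KSaux.dt (![1,-1,4] : Fin 3 → ℝ) ![1,-1,4] ≠ 0 := by norm_num [KSaux.dt, Matrix.cons_val_two, Matrix.tail_cons, Matrix.head_cons]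
  have h18 : f (KSaux.rk (KSaux.nv u ![1,-1,4])) = 0 ∨ f (KSaux.rk (KSaux.nv u ![1,-1,4])) = 1 := KSaux.proj01 hf hu hB18
  have hB19 : KSaux.dt (![1,0,-2] : Fin 3 → ℝ) ![1,0,-2] ≠ 0 := by norm_num [KSaux.dt, Matrix.cons_val_two, Matrix.tail_cons, Matrix.head_cons]
  have h19 : f (KSaux.rk (KSaux.nv u ![1,0,-2])) = 0 ∨ f (KSaux.rk (KSaux.nv u ![1,0,-2])) = 1 := KSaux.proj01 hf hu hB19
  have hB20 : KSaux.dt (![1,0,-1] : Fin 3 → ℝ) ![1,0,-1] ≠ 0 := by norm_num [KSaux.dt, Matrix.cons_val_two, Matrix.tail_cons, Matrix.head_cons]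
  have h20 : f (KSaux.rk (KSaux.nv u ![1,0,-1])) = 0 ∨ f (KSaux.rk (KSaux.nv u ![1,0,-1])) = 1 := KSaux.proj01 hf hu hB20
  have hB21 : KSaux.dt (![1,0,0] : Fin 3 → ℝ) ![1,0,0] ≠ 0 := by norm_num [KSaux.dt, Matrix.cons_val_two, Matrix.tail_cons, Matrix.head_cons]
  have h21 : f (KSaux.rk (KSaux.nv u ![1,0,0])) = 0 ∨ f (KSaux.rk (KSaux.nv u ![1,0,0])) = 1 := KSaux.proj01 hf hu hB21
  have hB22 : KSaux.dt (![1,0,1] : Fin 3 → ℝ) ![1,0,1] ≠ 0 := by norm_num [KSaux.dt, Matrix.cons_val_two, Matrix.tail_cons, Matrix.head_cons]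
  have h22 : f (KSaux.rk (KSaux.nv u ![1,0,1])) = 0 ∨ f (KSaux.rk (KSaux.nv u ![1,0,1])) = 1 := KSaux.proj01 hf hu hB22
  have hB23 : KSaux.dt (![1,0,2] : Fin 3 → ℝ) ![1,0,2] ≠ 0 := by norm_num [KSaux.dt, Matrix.cons_val_two, Matrix.tail_cons, Matrix.head_cons]
  have h23 : f (KSaux.rk (KSaux.nv u ![1,0,2])) = 0 ∨ f (KSaux.rk (KSaux.nv u ![1,0,2])) = 1 := KSaux.proj01 hf hu hB23
  have hB24 : KSaux.dt (![1,1,-2] : Fin 3 → ℝ) ![1,1,-2] ≠ 0 := by norm_num [KSaux.dt, Matrix.cons_val_two, Matrix.tail_cons, Matrix.head_cons]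
  have h24 : f (KSaux.rk (KSaux.nv u ![1,1,-2])) = 0 ∨ f (KSaux.rk (KSaux.nv u ![1,1,-2])) = 1 := KSaux.proj01 hf hu hB24
  have hB25 : KSaux.dt (![1,1,-1] : Fin 3 → ℝ) ![1,1,-1] ≠ 0 := by norm_num [KSaux.dt, Matrix.cons_val_two, Matrix.tail_cons, Matrix.head_cons]
  have h25 : f (KSaux.rk (KSaux.nv u ![1,1,-1])) = 0 ∨ f (KSaux.rk (KSaux.nv u ![1,1,-1])) = 1 := KSaux.proj01 hf hu hB25
  have hB26 : KSaux.dt (![1,1,0] : Fin 3 → ℝ) ![1,1,0] ≠ 0 := by norm_num [KSaux.dt, Matrix.cons_val_two, Matrix.tail_cons, Matrix.head_cons]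
  have h26 : f (KSaux.rk (KSaux.nv u ![1,1,0])) = 0 ∨ f (KSaux.rk (KSaux.nv u ![1,1,0])) = 1 := KSaux.proj01 hf hu hB26
  have hB27 : KSaux.dt (![1,1,1] : Fin 3 → ℝ) ![1,1,1] ≠ 0 := by norm_num [KSaux.dt, Matrix.cons_val_two, Matrix.tail_cons, Matrix.head_cons]
  have h27 : f (KSaux.rk (KSaux.nv u ![1,1,1])) = 0 ∨ f (KSaux.rk (KSaux.nv u ![1,1,1])) = 1 := KSaux.proj01 hf hu hB27
  have hB28 : KSaux.dt (![1,1,2] : Fin 3 → ℝ) ![1,1,2] ≠ 0 := by norm_num [KSaux.dt, Matrix.cons_val_two, Matrix.tail_cons, Matrix.head_cons]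
  have h28 : f (KSaux.rk (KSaux.nv u ![1,1,2])) = 0 ∨ f (KSaux.rk (KSaux.nv u ![1,1,2])) = 1 := KSaux.proj01 hf hu hB28
  have hB29 : KSaux.dt (![1,2,-2] : Fin 3 → ℝ) ![1,2,-2] ≠ 0 := by norm_num [KSaux.dt, Matrix.cons_val_two, Matrix.tail_cons, Matrix.head_cons]
  have h29 : f (KSaux.rk (KSaux.nv u ![1,2,-2])) = 0 ∨ f (KSaux.rk (KSaux.nv u ![1,2,-2])) = 1 := KSaux.proj01 hf hu hB29
  have hB30 : KSaux.dt (![1,2,-1] : Fin 3 → ℝ) ![1,2,-1] ≠ 0 := by norm_num [KSaux.dt, Matrix.cons_val_two, Matrix.tail_cons, Matrix.head_cons]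
  have h30 : f (KSaux.rk (KSaux.nv u ![1,2,-1])) = 0 ∨ f (KSaux.rk (KSaux.nv u ![1,2,-1])) = 1 := KSaux.proj01 hf hu hB30
  have hB31 : KSaux.dt (![1,2,1] : Fin 3 → ℝ) ![1,2,1] ≠ 0 := by norm_num [KSaux.dt, Matrix.cons_val_two, Matrix.tail_cons, Matrix.head_cons]
  have h31 : f (KSaux.rk (KSaux.nv u ![1,2,1])) = 0 ∨ f (KSaux.rk (KSaux.nv u ![1,2,1])) = 1 := KSaux.proj01 hf hu hB31
  have hB32 : KSaux.dt (![1,2,2] : Fin 3 → ℝ) ![1,2,2] ≠ 0 := by norm_num [KSaux.dt, Matrix.cons_val_two, Matrix.tail_cons, Matrix.head_cons]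
  have h32 : f (KSaux.rk (KSaux.nv u ![1,2,2])) = 0 ∨ f (KSaux.rk (KSaux.nv u ![1,2,2])) = 1 := KSaux.proj01 hf hu hB32
  have hB33 : KSaux.dt (![1,5,-2] : Fin 3 → ℝ) ![1,5,-2] ≠ 0 := by norm_num [KSaux.dt, Matrix.cons_val_two, Matrix.tail_cons, Matrix.head_cons]
  have h33 : f (KSaux.rk (KSaux.nv u ![1,5,-2])) = 0 ∨ f (KSaux.rk (KSaux.nv u ![1,5,-2])) = 1 := KSaux.proj01 hf hu hB33
  have hB34 : KSaux.dt (![1,5,2] : Fin 3 → ℝ) ![1,5,2] ≠ 0 := by norm_num [KSaux.dt, Matrix.cons_val_two, Matrix.tail_cons, Matrix.head_cons]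
  have h34 : f (KSaux.rk (KSaux.nv u ![1,5,2])) = 0 ∨ f (KSaux.rk (KSaux.nv u ![1,5,2])) = 1 := KSaux.proj01 hf hu hB34
  have hB35 : KSaux.dt (![2,-5,-4] : Fin 3 → ℝ) ![2,-5,-4] ≠ 0 := by norm_num [KSaux.dt, Matrix.cons_val_two, Matrix.tail_cons, Matrix.head_cons]
  have h35 : f (KSaux.rk (KSaux.nv u ![2,-5,-4])) = 0 ∨ f (KSaux.rk (KSaux.nv u ![2,-5,-4])) = 1 := KSaux.proj01 hf hu hB35
  have hB36 : KSaux.dt (![2,-5,-1] : Fin 3 → ℝ) ![2,-5,-1] ≠ 0 := by norm_num [KSaux.dt, Matrix.cons_val_two, Matrix.tail_cons, Matrix.head_cons]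
  have h36 : f (KSaux.rk (KSaux.nv u ![2,-5,-1])) = 0 ∨ f (KSaux.rk (KSaux.nv u ![2,-5,-1])) = 1 := KSaux.proj01 hf hu hB36
  have hB37 : KSaux.dt (![2,-5,1] : Fin 3 → ℝ) ![2,-5,1] ≠ 0 := by norm_num [KSaux.dt, Matrix.cons_val_two, Matrix.tail_cons, Matrix.head_cons]
  have h37 : f (KSaux.rk (KSaux.nv u ![2,-5,1])) = 0 ∨ f (KSaux.rk (KSaux.nv u ![2,-5,1])) = 1 := KSaux.proj01 hf hu hB37
  have hB38 : KSaux.dt (![2,-5,4] : Fin 3 → ℝ) ![2,-5,4] ≠ 0 := by norm_num [KSaux.dt, Matrix.cons_val_two, Matrix.tail_cons, Matrix.head_cons]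
  have h38 : f (KSaux.rk (KSaux.nv u ![2,-5,4])) = 0 ∨ f (KSaux.rk (KSaux.nv u ![2,-5,4])) = 1 := KSaux.proj01 hf hu hB38
  have hB39 : KSaux.dt (![2,-2,-1] : Fin 3 → ℝ) ![2,-2,-1] ≠ 0 := by norm_num [KSaux.dt, Matrix.cons_val_two, Matrix.tail_cons, Matrix.head_cons]
  have h39 : f (KSaux.rk (KSaux.nv u ![2,-2,-1])) = 0 ∨ f (KSaux.rk (KSaux.nv u ![2,-2,-1])) = 1 := KSaux.proj01 hf hu hB39
  have hB40 : KSaux.dt (![2,-2,1] : Fin 3 → ℝ) ![2,-2,1] ≠ 0 := by norm_num [KSaux.dt, Matrix.cons_val_two, Matrix.tail_cons, Matrix.head_cons]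
  have h40 : f (KSaux.rk (KSaux.nv u ![2,-2,1])) = 0 ∨ f (KSaux.rk (KSaux.nv u ![2,-2,1])) = 1 := KSaux.proj01 hf hu hB40
  have hB41 : KSaux.dt (![2,-1,-1] : Fin 3 → ℝ) ![2,-1,-1] ≠ 0 := by norm_num [KSaux.dt, Matrix.cons_val_two, Matrix.tail_cons, Matrix.head_cons]
  have h41 : f (KSaux.rk (KSaux.nv u ![2,-1,-1])) = 0 ∨ f (KSaux.rk (KSaux.nv u ![2,-1,-1])) = 1 := KSaux.proj01 hf hu hB41
  have hB42 : KSaux.dt (![2,-1,1] : Fin 3 → ℝ) ![2,-1,1] ≠ 0 := by norm_num [KSaux.dt, Matrix.cons_val_two, Matrix.tail_cons, Matrix.head_cons]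
  have h42 : f (KSaux.rk (KSaux.nv u ![2,-1,1])) = 0 ∨ f (KSaux.rk (KSaux.nv u ![2,-1,1])) = 1 := KSaux.proj01 hf hu hB42
  have hB43 : KSaux.dt (![2,0,-1] : Fin 3 → ℝ) ![2,0,-1] ≠ 0 := by norm_num [KSaux.dt, Matrix.cons_val_two, Matrix.tail_cons, Matrix.head_cons]
  have h43 : f (KSaux.rk (KSaux.nv u ![2,0,-1])) = 0 ∨ f (KSaux.rk (KSaux.nv u ![2,0,-1])) = 1 := KSaux.proj01 hf hu hB43
  have hB44 : KSaux.dt (![2,0,1] : Fin 3 → ℝ) ![2,0,1] ≠ 0 := by norm_num [KSaux.dt, Matrix.cons_val_two, Matrix.tail_cons, Matrix.head_cons]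
  have h44 : f (KSaux.rk (KSaux.nv u ![2,0,1])) = 0 ∨ f (KSaux.rk (KSaux.nv u ![2,0,1])) = 1 := KSaux.proj01 hf hu hB44
  have hB45 : KSaux.dt (![2,1,-2] : Fin 3 → ℝ) ![2,1,-2] ≠ 0 := by norm_num [KSaux.dt, Matrix.cons_val_two, Matrix.tail_cons, Matrix.head_cons]
  have h45 : f (KSaux.rk (KSaux.nv u ![2,1,-2])) = 0 ∨ f (KSaux.rk (KSaux.nv u ![2,1,-2])) = 1 := KSaux.proj01 hf hu hB45
  have hB46 : KSaux.dt (![2,1,-1] : Fin 3 → ℝ) ![2,1,-1] ≠ 0 := by norm_num [KSaux.dt, Matrix.cons_val_two, Matrix.tail_cons, Matrix.head_cons]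
  have h46 : f (KSaux.rk (KSaux.nv u ![2,1,-1])) = 0 ∨ f (KSaux.rk (KSaux.nv u ![2,1,-1])) = 1 := KSaux.proj01 hf hu hB46
  have hB47 : KSaux.dt (![2,1,1] : Fin 3 → ℝ) ![2,1,1] ≠ 0 := by norm_num [KSaux.dt, Matrix.cons_val_two, Matrix.tail_cons, Matrix.head_cons]
  have h47 : f (KSaux.rk (KSaux.nv u ![2,1,1])) = 0 ∨ f (KSaux.rk (KSaux.nv u ![2,1,1])) = 1 := KSaux.proj01 hf hu hB47
  have hB48 : KSaux.dt (![2,1,2] : Fin 3 → ℝ) ![2,1,2] ≠ 0 := by norm_num [KSaux.dt, Matrix.cons_val_two, Matrix.tail_cons, Matrix.head_cons]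
  have h48 : f (KSaux.rk (KSaux.nv u ![2,1,2])) = 0 ∨ f (KSaux.rk (KSaux.nv u ![2,1,2])) = 1 := KSaux.proj01 hf hu hB48
  have hB49 : KSaux.dt (![2,5,-1] : Fin 3 → ℝ) ![2,5,-1] ≠ 0 := by norm_num [KSaux.dt, Matrix.cons_val_two, Matrix.tail_cons, Matrix.head_cons]
  have h49 : f (KSaux.rk (KSaux.nv u ![2,5,-1])) = 0 ∨ f (KSaux.rk (KSaux.nv u ![2,5,-1])) = 1 := KSaux.proj01 hf hu hB49
  have hB50 : KSaux.dt (![2,5,1] : Fin 3 → ℝ) ![2,5,1] ≠ 0 := by norm_num [KSaux.dt, Matrix.cons_val_two, Matrix.tail_cons, Matrix.head_cons]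
  have h50 : f (KSaux.rk (KSaux.nv u ![2,5,1])) = 0 ∨ f (KSaux.rk (KSaux.nv u ![2,5,1])) = 1 := KSaux.proj01 hf hu hB50
  have hB51 : KSaux.dt (![5,-2,-1] : Fin 3 → ℝ) ![5,-2,-1] ≠ 0 := by norm_num [KSaux.dt, Matrix.cons_val_two, Matrix.tail_cons, Matrix.head_cons]
  have h51 : f (KSaux.rk (KSaux.nv u ![5,-2,-1])) = 0 ∨ f (KSaux.rk (KSaux.nv u ![5,-2,-1])) = 1 := KSaux.proj01 hf hu hB51
  have hB52 : KSaux.dt (![5,-2,1] : Fin 3 → ℝ) ![5,-2,1] ≠ 0 := by norm_num [KSaux.dt, Matrix.cons_val_two, Matrix.tail_cons, Matrix.head_cons]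
  have h52 : f (KSaux.rk (KSaux.nv u ![5,-2,1])) = 0 ∨ f (KSaux.rk (KSaux.nv u ![5,-2,1])) = 1 := KSaux.proj01 hf hu hB52
  have hB53 : KSaux.dt (![5,-1,-2] : Fin 3 → ℝ) ![5,-1,-2] ≠ 0 := by norm_num [KSaux.dt, Matrix.cons_val_two, Matrix.tail_cons, Matrix.head_cons]
  have h53 : f (KSaux.rk (KSaux.nv u ![5,-1,-2])) = 0 ∨ f (KSaux.rk (KSaux.nv u ![5,-1,-2])) = 1 := KSaux.proj01 hf hu hB53
  have hB54 : KSaux.dt (![5,-1,2] : Fin 3 → ℝ) ![5,-1,2] ≠ 0 := by norm_num [KSaux.dt, Matrix.cons_val_two, Matrix.tail_cons, Matrix.head_cons]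
  have h54 : f (KSaux.rk (KSaux.nv u ![5,-1,2])) = 0 ∨ f (KSaux.rk (KSaux.nv u ![5,-1,2])) = 1 := KSaux.proj01 hf hu hB54
  have hB55 : KSaux.dt (![5,1,-2] : Fin 3 → ℝ) ![5,1,-2] ≠ 0 := by norm_num [KSaux.dt, Matrix.cons_val_two, Matrix.tail_cons, Matrix.head_cons]
  have h55 : f (KSaux.rk (KSaux.nv u ![5,1,-2])) = 0 ∨ f (KSaux.rk (KSaux.nv u ![5,1,-2])) = 1 := KSaux.proj01 hf hu hB55
  have hB56 : KSaux.dt (![5,1,2] : Fin 3 → ℝ) ![5,1,2] ≠ 0 := by norm_num [KSaux.dt, Matrix.cons_val_two, Matrix.tail_cons, Matrix.head_cons]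
  have h56 : f (KSaux.rk (KSaux.nv u ![5,1,2])) = 0 ∨ f (KSaux.rk (KSaux.nv u ![5,1,2])) = 1 := KSaux.proj01 hf hu hB56
  have hB57 : KSaux.dt (![5,2,-1] : Fin 3 → ℝ) ![5,2,-1] ≠ 0 := by norm_num [KSaux.dt, Matrix.cons_val_two, Matrix.tail_cons, Matrix.head_cons]
  have h57 : f (KSaux.rk (KSaux.nv u ![5,2,-1])) = 0 ∨ f (KSaux.rk (KSaux.nv u ![5,2,-1])) = 1 := KSaux.proj01 hf hu hB57
  have hB58 : KSaux.dt (![5,2,1] : Fin 3 → ℝ) ![5,2,1] ≠ 0 := by norm_num [KSaux.dt, Matrix.cons_val_two, Matrix.tail_cons, Matrix.head_cons]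
  have h58 : f (KSaux.rk (KSaux.nv u ![5,2,1])) = 0 ∨ f (KSaux.rk (KSaux.nv u ![5,2,1])) = 1 := KSaux.proj01 hf hu hB58
  have e0 : f (KSaux.rk (KSaux.nv u ![0,0,1])) + f (KSaux.rk (KSaux.nv u ![0,1,0])) + f (KSaux.rk (KSaux.nv u ![1,0,0])) = 1 := by
    have h := KSaux.triple_sum hf hu hB0 hB3 hB21 (by norm_num [KSaux.dt, Matrix.cons_val_two, Matrix.tail_cons, Matrix.head_cons]) (by norm_num [KSaux.dt, Matrix.cons_val_two, Matrix.tail_cons, Matrix.head_cons]) (by norm_num [KSaux.dt, Matrix.cons_val_two, Matrix.tail_cons, Matrix.head_cons])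
    rwa [hfPS1] at h
  have e1 : f (KSaux.rk (KSaux.nv u ![0,0,1])) + f (KSaux.rk (KSaux.nv u ![1,-1,0])) + f (KSaux.rk (KSaux.nv u ![1,1,0])) = 1 := by
    have h := KSaux.triple_sum hf hu hB0 hB15 hB26 (by norm_num [KSaux.dt, Matrix.cons_val_two, Matrix.tail_cons, Matrix.head_cons]) (by norm_num [KSaux.dt, Matrix.cons_val_two, Matrix.tail_cons, Matrix.head_cons]) (by norm_num [KSaux.dt, Matrix.cons_val_two, Matrix.tail_cons, Matrix.head_cons])
    rwa [hfPS1] at h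
  have e2 : f (KSaux.rk (KSaux.nv u ![0,1,-2])) + f (KSaux.rk (KSaux.nv u ![0,2,1])) + f (KSaux.rk (KSaux.nv u ![1,0,0])) = 1 := by
    have h := KSaux.triple_sum hf hu hB1 hB7 hB21 (by norm_num [KSaux.dt, Matrix.cons_val_two, Matrix.tail_cons, Matrix.head_cons]) (by norm_num [KSaux.dt, Matrix.cons_val_two, Matrix.tail_cons, Matrix.head_cons]) (by norm_num [KSaux.dt, Matrix.cons_val_two, Matrix.tail_cons, Matrix.head_cons])
    rwa [hfPS1] at h
  have e3 : f (KSaux.rk (KSaux.nv u ![0,1,-2])) + f (KSaux.rk (KSaux.nv u ![1,-2,-1])) + f (KSaux.rk (KSaux.nv u ![5,2,1])) = 1 := by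
    have h := KSaux.triple_sum hf hu hB1 hB10 hB58 (by norm_num [KSaux.dt, Matrix.cons_val_two, Matrix.tail_cons, Matrix.head_cons]) (by norm_num [KSaux.dt, Matrix.cons_val_two, Matrix.tail_cons, Matrix.head_cons]) (by norm_num [KSaux.dt, Matrix.cons_val_two, Matrix.tail_cons, Matrix.head_cons])
    rwa [hfPS1] at h
  have e4 : f (KSaux.rk (KSaux.nv u ![0,1,-2])) + f (KSaux.rk (KSaux.nv u ![1,2,1])) + f (KSaux.rk (KSaux.nv u ![5,-2,-1])) = 1 := by
    have h := KSaux.triple_sum hf hu hB1 hB31 hB51 (by norm_num [KSaux.dt, Matrix.cons_val_two, Matrix.tail_cons, Matrix.head_cons]) (by norm_num [KSaux.dt, Matrix.cons_val_two, Matrix.tail_cons, Matrix.head_cons]) (by norm_num [KSaux.dt, Matrix.cons_val_two, Matrix.tail_cons, Matrix.head_cons])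
    rwa [hfPS1] at h
  have e5 : f (KSaux.rk (KSaux.nv u ![0,1,-1])) + f (KSaux.rk (KSaux.nv u ![0,1,1])) + f (KSaux.rk (KSaux.nv u ![1,0,0])) = 1 := by
    have h := KSaux.triple_sum hf hu hB2 hB4 hB21 (by norm_num [KSaux.dt, Matrix.cons_val_two, Matrix.tail_cons, Matrix.head_cons]) (by norm_num [KSaux.dt, Matrix.cons_val_two, Matrix.tail_cons, Matrix.head_cons]) (by norm_num [KSaux.dt, Matrix.cons_val_two, Matrix.tail_cons, Matrix.head_cons])
    rwa [hfPS1] at h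
  have e6 : f (KSaux.rk (KSaux.nv u ![0,1,-1])) + f (KSaux.rk (KSaux.nv u ![1,-1,-1])) + f (KSaux.rk (KSaux.nv u ![2,1,1])) = 1 := by
    have h := KSaux.triple_sum hf hu hB2 hB14 hB47 (by norm_num [KSaux.dt, Matrix.cons_val_two, Matrix.tail_cons, Matrix.head_cons]) (by norm_num [KSaux.dt, Matrix.cons_val_two, Matrix.tail_cons, Matrix.head_cons]) (by norm_num [KSaux.dt, Matrix.cons_val_two, Matrix.tail_cons, Matrix.head_cons])
    rwa [hfPS1] at h
  have e7 : f (KSaux.rk (KSaux.nv u ![0,1,-1])) + f (KSaux.rk (KSaux.nv u ![1,1,1])) + f (KSaux.rk (KSaux.nv u ![2,-1,-1])) = 1 := by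
    have h := KSaux.triple_sum hf hu hB2 hB27 hB41 (by norm_num [KSaux.dt, Matrix.cons_val_two, Matrix.tail_cons, Matrix.head_cons]) (by norm_num [KSaux.dt, Matrix.cons_val_two, Matrix.tail_cons, Matrix.head_cons]) (by norm_num [KSaux.dt, Matrix.cons_val_two, Matrix.tail_cons, Matrix.head_cons])
    rwa [hfPS1] at h
  have e8 : f (KSaux.rk (KSaux.nv u ![0,1,0])) + f (KSaux.rk (KSaux.nv u ![1,0,-2])) + f (KSaux.rk (KSaux.nv u ![2,0,1])) = 1 := by
    have h := KSaux.triple_sum hf hu hB3 hB19 hB44 (by norm_num [KSaux.dt, Matrix.cons_val_two, Matrix.tail_cons, Matrix.head_cons]) (by norm_num [KSaux.dt, Matrix.cons_val_two, Matrix.tail_cons, Matrix.head_cons]) (by norm_num [KSaux.dt, Matrix.cons_val_two, Matrix.tail_cons, Matrix.head_cons])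
    rwa [hfPS1] at h
  have e9 : f (KSaux.rk (KSaux.nv u ![0,1,0])) + f (KSaux.rk (KSaux.nv u ![1,0,-1])) + f (KSaux.rk (KSaux.nv u ![1,0,1])) = 1 := by
    have h := KSaux.triple_sum hf hu hB3 hB20 hB22 (by norm_num [KSaux.dt, Matrix.cons_val_two, Matrix.tail_cons, Matrix.head_cons]) (by norm_num [KSaux.dt, Matrix.cons_val_two, Matrix.tail_cons, Matrix.head_cons]) (by norm_num [KSaux.dt, Matrix.cons_val_two, Matrix.tail_cons, Matrix.head_cons])
    rwa [hfPS1] at h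
  have e10 : f (KSaux.rk (KSaux.nv u ![0,1,0])) + f (KSaux.rk (KSaux.nv u ![1,0,2])) + f (KSaux.rk (KSaux.nv u ![2,0,-1])) = 1 := by
    have h := KSaux.triple_sum hf hu hB3 hB23 hB43 (by norm_num [KSaux.dt, Matrix.cons_val_two, Matrix.tail_cons, Matrix.head_cons]) (by norm_num [KSaux.dt, Matrix.cons_val_two, Matrix.tail_cons, Matrix.head_cons]) (by norm_num [KSaux.dt, Matrix.cons_val_two, Matrix.tail_cons, Matrix.head_cons])
    rwa [hfPS1] at h
  have e11 : f (KSaux.rk (KSaux.nv u ![0,1,1])) + f (KSaux.rk (KSaux.nv u ![1,-1,1])) + f (KSaux.rk (KSaux.nv u ![2,1,-1])) = 1 := by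
    have h := KSaux.triple_sum hf hu hB4 hB16 hB46 (by norm_num [KSaux.dt, Matrix.cons_val_two, Matrix.tail_cons, Matrix.head_cons]) (by norm_num [KSaux.dt, Matrix.cons_val_two, Matrix.tail_cons, Matrix.head_cons]) (by norm_num [KSaux.dt, Matrix.cons_val_two, Matrix.tail_cons, Matrix.head_cons])
    rwa [hfPS1] at h
  have e12 : f (KSaux.rk (KSaux.nv u ![0,1,1])) + f (KSaux.rk (KSaux.nv u ![1,1,-1])) + f (KSaux.rk (KSaux.nv u ![2,-1,1])) = 1 := by
    have h := KSaux.triple_sum hf hu hB4 hB25 hB42 (by norm_num [KSaux.dt, Matrix.cons_val_two, Matrix.tail_cons, Matrix.head_cons]) (by norm_num [KSaux.dt, Matrix.cons_val_two, Matrix.tail_cons, Matrix.head_cons]) (by norm_num [KSaux.dt, Matrix.cons_val_two, Matrix.tail_cons, Matrix.head_cons])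
    rwa [hfPS1] at h
  have e13 : f (KSaux.rk (KSaux.nv u ![0,1,2])) + f (KSaux.rk (KSaux.nv u ![0,2,-1])) + f (KSaux.rk (KSaux.nv u ![1,0,0])) = 1 := by
    have h := KSaux.triple_sum hf hu hB5 hB6 hB21 (by norm_num [KSaux.dt, Matrix.cons_val_two, Matrix.tail_cons, Matrix.head_cons]) (by norm_num [KSaux.dt, Matrix.cons_val_two, Matrix.tail_cons, Matrix.head_cons]) (by norm_num [KSaux.dt, Matrix.cons_val_two, Matrix.tail_cons, Matrix.head_cons])
    rwa [hfPS1] at h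
  have e14 : f (KSaux.rk (KSaux.nv u ![0,1,2])) + f (KSaux.rk (KSaux.nv u ![1,-2,1])) + f (KSaux.rk (KSaux.nv u ![5,2,-1])) = 1 := by
    have h := KSaux.triple_sum hf hu hB5 hB11 hB57 (by norm_num [KSaux.dt, Matrix.cons_val_two, Matrix.tail_cons, Matrix.head_cons]) (by norm_num [KSaux.dt, Matrix.cons_val_two, Matrix.tail_cons, Matrix.head_cons]) (by norm_num [KSaux.dt, Matrix.cons_val_two, Matrix.tail_cons, Matrix.head_cons])
    rwa [hfPS1] at h
  have e15 : f (KSaux.rk (KSaux.nv u ![0,1,2])) + f (KSaux.rk (KSaux.nv u ![1,2,-1])) + f (KSaux.rk (KSaux.nv u ![5,-2,1])) = 1 := by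
    have h := KSaux.triple_sum hf hu hB5 hB30 hB52 (by norm_num [KSaux.dt, Matrix.cons_val_two, Matrix.tail_cons, Matrix.head_cons]) (by norm_num [KSaux.dt, Matrix.cons_val_two, Matrix.tail_cons, Matrix.head_cons]) (by norm_num [KSaux.dt, Matrix.cons_val_two, Matrix.tail_cons, Matrix.head_cons])
    rwa [hfPS1] at h
  have e16 : f (KSaux.rk (KSaux.nv u ![0,2,-1])) + f (KSaux.rk (KSaux.nv u ![1,-1,-2])) + f (KSaux.rk (KSaux.nv u ![5,1,2])) = 1 := by
    have h := KSaux.triple_sum hf hu hB6 hB13 hB56 (by norm_num [KSaux.dt, Matrix.cons_val_two, Matrix.tail_cons, Matrix.head_cons]) (by norm_num [KSaux.dt, Matrix.cons_val_two, Matrix.tail_cons, Matrix.head_cons]) (by norm_num [KSaux.dt, Matrix.cons_val_two, Matrix.tail_cons, Matrix.head_cons])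
    rwa [hfPS1] at h
  have e17 : f (KSaux.rk (KSaux.nv u ![0,2,-1])) + f (KSaux.rk (KSaux.nv u ![1,1,2])) + f (KSaux.rk (KSaux.nv u ![5,-1,-2])) = 1 := by
    have h := KSaux.triple_sum hf hu hB6 hB28 hB53 (by norm_num [KSaux.dt, Matrix.cons_val_two, Matrix.tail_cons, Matrix.head_cons]) (by norm_num [KSaux.dt, Matrix.cons_val_two, Matrix.tail_cons, Matrix.head_cons]) (by norm_num [KSaux.dt, Matrix.cons_val_two, Matrix.tail_cons, Matrix.head_cons])
    rwa [hfPS1] at h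
  have e18 : f (KSaux.rk (KSaux.nv u ![0,2,1])) + f (KSaux.rk (KSaux.nv u ![1,-1,2])) + f (KSaux.rk (KSaux.nv u ![5,1,-2])) = 1 := by
    have h := KSaux.triple_sum hf hu hB7 hB17 hB55 (by norm_num [KSaux.dt, Matrix.cons_val_two, Matrix.tail_cons, Matrix.head_cons]) (by norm_num [KSaux.dt, Matrix.cons_val_two, Matrix.tail_cons, Matrix.head_cons]) (by norm_num [KSaux.dt, Matrix.cons_val_two, Matrix.tail_cons, Matrix.head_cons])
    rwa [hfPS1] at h
  have e19 : f (KSaux.rk (KSaux.nv u ![0,2,1])) + f (KSaux.rk (KSaux.nv u ![1,1,-2])) + f (KSaux.rk (KSaux.nv u ![5,-1,2])) = 1 := by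
    have h := KSaux.triple_sum hf hu hB7 hB24 hB54 (by norm_num [KSaux.dt, Matrix.cons_val_two, Matrix.tail_cons, Matrix.head_cons]) (by norm_num [KSaux.dt, Matrix.cons_val_two, Matrix.tail_cons, Matrix.head_cons]) (by norm_num [KSaux.dt, Matrix.cons_val_two, Matrix.tail_cons, Matrix.head_cons])
    rwa [hfPS1] at h
  have e20 : f (KSaux.rk (KSaux.nv u ![1,-4,-1])) + f (KSaux.rk (KSaux.nv u ![1,0,1])) + f (KSaux.rk (KSaux.nv u ![2,1,-2])) = 1 := by
    have h := KSaux.triple_sum hf hu hB8 hB22 hB45 (by norm_num [KSaux.dt, Matrix.cons_val_two, Matrix.tail_cons, Matrix.head_cons]) (by norm_num [KSaux.dt, Matrix.cons_val_two, Matrix.tail_cons, Matrix.head_cons]) (by norm_num [KSaux.dt, Matrix.cons_val_two, Matrix.tail_cons, Matrix.head_cons])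
    rwa [hfPS1] at h
  have e21 : f (KSaux.rk (KSaux.nv u ![1,-4,1])) + f (KSaux.rk (KSaux.nv u ![1,0,-1])) + f (KSaux.rk (KSaux.nv u ![2,1,2])) = 1 := by
    have h := KSaux.triple_sum hf hu hB9 hB20 hB48 (by norm_num [KSaux.dt, Matrix.cons_val_two, Matrix.tail_cons, Matrix.head_cons]) (by norm_num [KSaux.dt, Matrix.cons_val_two, Matrix.tail_cons, Matrix.head_cons]) (by norm_num [KSaux.dt, Matrix.cons_val_two, Matrix.tail_cons, Matrix.head_cons])
    rwa [hfPS1] at h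
  have e22 : f (KSaux.rk (KSaux.nv u ![1,-2,-1])) + f (KSaux.rk (KSaux.nv u ![1,0,1])) + f (KSaux.rk (KSaux.nv u ![1,1,-1])) = 1 := by
    have h := KSaux.triple_sum hf hu hB10 hB22 hB25 (by norm_num [KSaux.dt, Matrix.cons_val_two, Matrix.tail_cons, Matrix.head_cons]) (by norm_num [KSaux.dt, Matrix.cons_val_two, Matrix.tail_cons, Matrix.head_cons]) (by norm_num [KSaux.dt, Matrix.cons_val_two, Matrix.tail_cons, Matrix.head_cons])
    rwa [hfPS1] at h
  have e23 : f (KSaux.rk (KSaux.nv u ![1,-2,1])) + f (KSaux.rk (KSaux.nv u ![1,0,-1])) + f (KSaux.rk (KSaux.nv u ![1,1,1])) = 1 := by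
    have h := KSaux.triple_sum hf hu hB11 hB20 hB27 (by norm_num [KSaux.dt, Matrix.cons_val_two, Matrix.tail_cons, Matrix.head_cons]) (by norm_num [KSaux.dt, Matrix.cons_val_two, Matrix.tail_cons, Matrix.head_cons]) (by norm_num [KSaux.dt, Matrix.cons_val_two, Matrix.tail_cons, Matrix.head_cons])
    rwa [hfPS1] at h
  have e24 : f (KSaux.rk (KSaux.nv u ![1,-1,-4])) + f (KSaux.rk (KSaux.nv u ![1,1,0])) + f (KSaux.rk (KSaux.nv u ![2,-2,1])) = 1 := by
    have h := KSaux.triple_sum hf hu hB12 hB26 hB40 (by norm_num [KSaux.dt, Matrix.cons_val_two, Matrix.tail_cons, Matrix.head_cons]) (by norm_num [KSaux.dt, Matrix.cons_val_two, Matrix.tail_cons, Matrix.head_cons]) (by norm_num [KSaux.dt, Matrix.cons_val_two, Matrix.tail_cons, Matrix.head_cons])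
    rwa [hfPS1] at h
  have e25 : f (KSaux.rk (KSaux.nv u ![1,-1,-2])) + f (KSaux.rk (KSaux.nv u ![1,-1,1])) + f (KSaux.rk (KSaux.nv u ![1,1,0])) = 1 := by
    have h := KSaux.triple_sum hf hu hB13 hB16 hB26 (by norm_num [KSaux.dt, Matrix.cons_val_two, Matrix.tail_cons, Matrix.head_cons]) (by norm_num [KSaux.dt, Matrix.cons_val_two, Matrix.tail_cons, Matrix.head_cons]) (by norm_num [KSaux.dt, Matrix.cons_val_two, Matrix.tail_cons, Matrix.head_cons])
    rwa [hfPS1] at h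
  have e26 : f (KSaux.rk (KSaux.nv u ![1,-1,-2])) + f (KSaux.rk (KSaux.nv u ![1,5,-2])) + f (KSaux.rk (KSaux.nv u ![2,0,1])) = 1 := by
    have h := KSaux.triple_sum hf hu hB13 hB33 hB44 (by norm_num [KSaux.dt, Matrix.cons_val_two, Matrix.tail_cons, Matrix.head_cons]) (by norm_num [KSaux.dt, Matrix.cons_val_two, Matrix.tail_cons, Matrix.head_cons]) (by norm_num [KSaux.dt, Matrix.cons_val_two, Matrix.tail_cons, Matrix.head_cons])
    rwa [hfPS1] at h
  have e27 : f (KSaux.rk (KSaux.nv u ![1,-1,-1])) + f (KSaux.rk (KSaux.nv u ![1,-1,2])) + f (KSaux.rk (KSaux.nv u ![1,1,0])) = 1 := by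
    have h := KSaux.triple_sum hf hu hB14 hB17 hB26 (by norm_num [KSaux.dt, Matrix.cons_val_two, Matrix.tail_cons, Matrix.head_cons]) (by norm_num [KSaux.dt, Matrix.cons_val_two, Matrix.tail_cons, Matrix.head_cons]) (by norm_num [KSaux.dt, Matrix.cons_val_two, Matrix.tail_cons, Matrix.head_cons])
    rwa [hfPS1] at h
  have e28 : f (KSaux.rk (KSaux.nv u ![1,-1,-1])) + f (KSaux.rk (KSaux.nv u ![1,0,1])) + f (KSaux.rk (KSaux.nv u ![1,2,-1])) = 1 := by
    have h := KSaux.triple_sum hf hu hB14 hB22 hB30 (by norm_num [KSaux.dt, Matrix.cons_val_two, Matrix.tail_cons, Matrix.head_cons]) (by norm_num [KSaux.dt, Matrix.cons_val_two, Matrix.tail_cons, Matrix.head_cons]) (by norm_num [KSaux.dt, Matrix.cons_val_two, Matrix.tail_cons, Matrix.head_cons])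
    rwa [hfPS1] at h
  have e29 : f (KSaux.rk (KSaux.nv u ![1,-1,0])) + f (KSaux.rk (KSaux.nv u ![1,1,-2])) + f (KSaux.rk (KSaux.nv u ![1,1,1])) = 1 := by
    have h := KSaux.triple_sum hf hu hB15 hB24 hB27 (by norm_num [KSaux.dt, Matrix.cons_val_two, Matrix.tail_cons, Matrix.head_cons]) (by norm_num [KSaux.dt, Matrix.cons_val_two, Matrix.tail_cons, Matrix.head_cons]) (by norm_num [KSaux.dt, Matrix.cons_val_two, Matrix.tail_cons, Matrix.head_cons])
    rwa [hfPS1] at h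
  have e30 : f (KSaux.rk (KSaux.nv u ![1,-1,0])) + f (KSaux.rk (KSaux.nv u ![1,1,-1])) + f (KSaux.rk (KSaux.nv u ![1,1,2])) = 1 := by
    have h := KSaux.triple_sum hf hu hB15 hB25 hB28 (by norm_num [KSaux.dt, Matrix.cons_val_two, Matrix.tail_cons, Matrix.head_cons]) (by norm_num [KSaux.dt, Matrix.cons_val_two, Matrix.tail_cons, Matrix.head_cons]) (by norm_num [KSaux.dt, Matrix.cons_val_two, Matrix.tail_cons, Matrix.head_cons])
    rwa [hfPS1] at h
  have e31 : f (KSaux.rk (KSaux.nv u ![1,-1,1])) + f (KSaux.rk (KSaux.nv u ![1,0,-1])) + f (KSaux.rk (KSaux.nv u ![1,2,1])) = 1 := by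
    have h := KSaux.triple_sum hf hu hB16 hB20 hB31 (by norm_num [KSaux.dt, Matrix.cons_val_two, Matrix.tail_cons, Matrix.head_cons]) (by norm_num [KSaux.dt, Matrix.cons_val_two, Matrix.tail_cons, Matrix.head_cons]) (by norm_num [KSaux.dt, Matrix.cons_val_two, Matrix.tail_cons, Matrix.head_cons])
    rwa [hfPS1] at h
  have e32 : f (KSaux.rk (KSaux.nv u ![1,-1,2])) + f (KSaux.rk (KSaux.nv u ![1,5,2])) + f (KSaux.rk (KSaux.nv u ![2,0,-1])) = 1 := by
    have h := KSaux.triple_sum hf hu hB17 hB34 hB43 (by norm_num [KSaux.dt, Matrix.cons_val_two, Matrix.tail_cons, Matrix.head_cons]) (by norm_num [KSaux.dt, Matrix.cons_val_two, Matrix.tail_cons, Matrix.head_cons]) (by norm_num [KSaux.dt, Matrix.cons_val_two, Matrix.tail_cons, Matrix.head_cons])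
    rwa [hfPS1] at h
  have e33 : f (KSaux.rk (KSaux.nv u ![1,-1,4])) + f (KSaux.rk (KSaux.nv u ![1,1,0])) + f (KSaux.rk (KSaux.nv u ![2,-2,-1])) = 1 := by
    have h := KSaux.triple_sum hf hu hB18 hB26 hB39 (by norm_num [KSaux.dt, Matrix.cons_val_two, Matrix.tail_cons, Matrix.head_cons]) (by norm_num [KSaux.dt, Matrix.cons_val_two, Matrix.tail_cons, Matrix.head_cons]) (by norm_num [KSaux.dt, Matrix.cons_val_two, Matrix.tail_cons, Matrix.head_cons])
    rwa [hfPS1] at h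
  have e34 : f (KSaux.rk (KSaux.nv u ![1,0,-2])) + f (KSaux.rk (KSaux.nv u ![2,-5,1])) + f (KSaux.rk (KSaux.nv u ![2,1,1])) = 1 := by
    have h := KSaux.triple_sum hf hu hB19 hB37 hB47 (by norm_num [KSaux.dt, Matrix.cons_val_two, Matrix.tail_cons, Matrix.head_cons]) (by norm_num [KSaux.dt, Matrix.cons_val_two, Matrix.tail_cons, Matrix.head_cons]) (by norm_num [KSaux.dt, Matrix.cons_val_two, Matrix.tail_cons, Matrix.head_cons])
    rwa [hfPS1] at h
  have e35 : f (KSaux.rk (KSaux.nv u ![1,0,-2])) + f (KSaux.rk (KSaux.nv u ![2,-1,1])) + f (KSaux.rk (KSaux.nv u ![2,5,1])) = 1 := by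
    have h := KSaux.triple_sum hf hu hB19 hB42 hB50 (by norm_num [KSaux.dt, Matrix.cons_val_two, Matrix.tail_cons, Matrix.head_cons]) (by norm_num [KSaux.dt, Matrix.cons_val_two, Matrix.tail_cons, Matrix.head_cons]) (by norm_num [KSaux.dt, Matrix.cons_val_two, Matrix.tail_cons, Matrix.head_cons])
    rwa [hfPS1] at h
  have e36 : f (KSaux.rk (KSaux.nv u ![1,0,2])) + f (KSaux.rk (KSaux.nv u ![2,-5,-1])) + f (KSaux.rk (KSaux.nv u ![2,1,-1])) = 1 := by
    have h := KSaux.triple_sum hf hu hB23 hB36 hB46 (by norm_num [KSaux.dt, Matrix.cons_val_two, Matrix.tail_cons, Matrix.head_cons]) (by norm_num [KSaux.dt, Matrix.cons_val_two, Matrix.tail_cons, Matrix.head_cons]) (by norm_num [KSaux.dt, Matrix.cons_val_two, Matrix.tail_cons, Matrix.head_cons])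
    rwa [hfPS1] at h
  have e37 : f (KSaux.rk (KSaux.nv u ![1,0,2])) + f (KSaux.rk (KSaux.nv u ![2,-1,-1])) + f (KSaux.rk (KSaux.nv u ![2,5,-1])) = 1 := by
    have h := KSaux.triple_sum hf hu hB23 hB41 hB49 (by norm_num [KSaux.dt, Matrix.cons_val_two, Matrix.tail_cons, Matrix.head_cons]) (by norm_num [KSaux.dt, Matrix.cons_val_two, Matrix.tail_cons, Matrix.head_cons]) (by norm_num [KSaux.dt, Matrix.cons_val_two, Matrix.tail_cons, Matrix.head_cons])
    rwa [hfPS1] at h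
  have e38 : f (KSaux.rk (KSaux.nv u ![1,2,-2])) + f (KSaux.rk (KSaux.nv u ![2,-5,-4])) + f (KSaux.rk (KSaux.nv u ![2,0,1])) = 1 := by
    have h := KSaux.triple_sum hf hu hB29 hB35 hB44 (by norm_num [KSaux.dt, Matrix.cons_val_two, Matrix.tail_cons, Matrix.head_cons]) (by norm_num [KSaux.dt, Matrix.cons_val_two, Matrix.tail_cons, Matrix.head_cons]) (by norm_num [KSaux.dt, Matrix.cons_val_two, Matrix.tail_cons, Matrix.head_cons])
    rwa [hfPS1] at h
  have e39 : f (KSaux.rk (KSaux.nv u ![1,2,-2])) + f (KSaux.rk (KSaux.nv u ![2,-2,-1])) + f (KSaux.rk (KSaux.nv u ![2,1,2])) = 1 := by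
    have h := KSaux.triple_sum hf hu hB29 hB39 hB48 (by norm_num [KSaux.dt, Matrix.cons_val_two, Matrix.tail_cons, Matrix.head_cons]) (by norm_num [KSaux.dt, Matrix.cons_val_two, Matrix.tail_cons, Matrix.head_cons]) (by norm_num [KSaux.dt, Matrix.cons_val_two, Matrix.tail_cons, Matrix.head_cons])
    rwa [hfPS1] at h
  have e40 : f (KSaux.rk (KSaux.nv u ![1,2,2])) + f (KSaux.rk (KSaux.nv u ![2,-5,4])) + f (KSaux.rk (KSaux.nv u ![2,0,-1])) = 1 := by
    have h := KSaux.triple_sum hf hu hB32 hB38 hB43 (by norm_num [KSaux.dt, Matrix.cons_val_two, Matrix.tail_cons, Matrix.head_cons]) (by norm_num [KSaux.dt, Matrix.cons_val_two, Matrix.tail_cons, Matrix.head_cons]) (by norm_num [KSaux.dt, Matrix.cons_val_two, Matrix.tail_cons, Matrix.head_cons])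
    rwa [hfPS1] at h
  have e41 : f (KSaux.rk (KSaux.nv u ![1,2,2])) + f (KSaux.rk (KSaux.nv u ![2,-2,1])) + f (KSaux.rk (KSaux.nv u ![2,1,-2])) = 1 := by
    have h := KSaux.triple_sum hf hu hB32 hB40 hB45 (by norm_num [KSaux.dt, Matrix.cons_val_two, Matrix.tail_cons, Matrix.head_cons]) (by norm_num [KSaux.dt, Matrix.cons_val_two, Matrix.tail_cons, Matrix.head_cons]) (by norm_num [KSaux.dt, Matrix.cons_val_two, Matrix.tail_cons, Matrix.head_cons])
    rwa [hfPS1] at h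
  exact KS_core _ _ _ _ _ _ _ _ _ _ _ _ _ _ _ _ _ _ _ _ _ _ _ _ _ _ _ _ _ _ _ _ _ _ _ _ _ _ _ _ _ _ _ _ _ _ _ _ _ _ _ _ _ _ _ _ _ _ _ h0 h1 h2 h3 h4 h5 h6 h7 h8 h9 h10 h11 h12 h13 h14 h15 h16 h17 h18 h19 h20 h21 h22 h23 h24 h25 h26 h27 h28 h29 h30 h31 h32 h33 h34 h35 h36 h37 h38 h39 h40 h41 h42 h43 h44 h45 h46 h47 h48 h49 h50 h51 h52 h53 h54 h55 h56 h57 h58 e0 e1 e2 e3 e4 e5 e6 e7 e8 e9 e10 e11 e12 e13 e14 e15 e16 e17 e18 e19 e20 e21 e22 e23 e24 e25 e26 e27 e28 e29 e30 e31 e32 e33 e34 e35 e36 e37 e38 e39 e40 e41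
end
end

section
/- Let M₁ and M₂ be N-matrices for a propositional language L and let F be an expansion function for M₁. Then: (1) every simple F-rexpansion of M₁ is preserving; (2) the F-expansion of M₁ itself is a strongly preserving F-rexpansion of M₁; (3) if M₁ is an ordinary (deterministic) matrix (every interpretation set a singleton), then every preserving F-rexpansion of M₁ is strongly preserving. -/
/-- A propositional language: a set of connectives, each with a finite arity. -/
structure PLang : Type 1 where
  Conn : Type
  arity : Conn → ℕ

/-- A non-deterministic matrix (N-matrix). -/
structure NMatrix (L : PLang) : Type 1 where
  V : Type
  D : Set V
  D_nonempty : D.Nonempty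
  D_proper : D ≠ Set.univ
  O : (c : L.Conn) → (Fin (L.arity c) → V) → Set V
  O_nonempty : ∀ c xs, (O c xs).Nonempty

/-- An ordinary (deterministic) matrix: all interpretation sets are singletons. -/
def NMatrix.IsDeterministic {L : PLang} (M : NMatrix L) : Prop :=
  ∀ (c : L.Conn) (xs : Fin (L.arity c) → M.V), ∃ y, M.O c xs = {y}

/-- `M₁` is a refinement of `M₂`, realized by the inclusion `e : V₁ ↪ V₂`:
`D₁ = D₂ ∩ V₁` and `O₁(x̄) ⊆ O₂(x̄)` for every tuple `x̄` over `V₁`. -/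
def IsRefinementVia {L : PLang} (M₁ M₂ : NMatrix L) (e : M₁.V ↪ M₂.V) : Prop :=
  (∀ x : M₁.V, x ∈ M₁.D ↔ e x ∈ M₂.D) ∧
  ∀ (c : L.Conn) (xs : Fin (L.arity c) → M₁.V) (y : M₁.V),
    y ∈ M₁.O c xs → e y ∈ M₂.O c (fun i => e (xs i))

/-- An expansion function for `M₁` with values in `W`: it assigns to each truth value a
nonempty set, and distinct truth values get disjoint sets. -/
structure ExpansionFunction {L : PLang} (M₁ : NMatrix L) (W : Type) where
  F : M₁.V → Set W
  nonempty : ∀ x, (F x).Nonempty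
  disjoint : ∀ ⦃x₁ x₂ : M₁.V⦄, x₁ ≠ x₂ → F x₁ ∩ F x₂ = ∅

namespace ExpansionFunction

variable {L : PLang} {M₁ : NMatrix L} {W : Type} (F : ExpansionFunction M₁ W)

/-- `F̃[w]`: the unique original truth value `x` with `w ∈ F x`. -/
noncomputable def back (w : {w : W // ∃ x, w ∈ F.F x}) : M₁.V := w.2.choose

theorem back_mem (w : {w : W // ∃ x, w ∈ F.F x}) : w.1 ∈ F.F (F.back w) :=
  w.2.choose_spec

theorem back_eq (w : {w : W // ∃ x, w ∈ F.F x}) {x : M₁.V} (hx : w.1 ∈ F.F x) :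
    F.back w = x := by
  by_contra h
  have h' := F.disjoint h
  have : w.1 ∈ F.F (F.back w) ∩ F.F x := ⟨F.back_mem w, hx⟩
  rw [h'] at this
  exact this

/-- The `F`-expansion of `M₁`: truth values `V_F = ⋃_x F(x)`, designated values
`D_F = ⋃_{x ∈ D₁} F(x)`, and `⋄̃(y₁,…,yₙ) = ⋃_{z ∈ ⋄̃₁(F̃[y₁],…,F̃[yₙ])} F(z)`. -/
noncomputable def expand : NMatrix L where
  V := {w : W // ∃ x, w ∈ F.F x}
  D := {w | F.back w ∈ M₁.D}
  D_nonempty := by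
    obtain ⟨d, hd⟩ := M₁.D_nonempty
    obtain ⟨w, hw⟩ := F.nonempty d
    exact ⟨⟨w, d, hw⟩, by simpa [F.back_eq ⟨w, d, hw⟩ hw] using hd⟩
  D_proper := by
    rw [Set.ne_univ_iff_exists_notMem]
    obtain ⟨x, hx⟩ := Set.ne_univ_iff_exists_notMem _ |>.mp M₁.D_proper
    obtain ⟨w, hw⟩ := F.nonempty x
    exact ⟨⟨w, x, hw⟩, by simpa [F.back_eq ⟨w, x, hw⟩ hw] using hx⟩
  O := fun c ys => {w | F.back w ∈ M₁.O c (fun i => F.back (ys i))}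
  O_nonempty := by
    intro c ys
    obtain ⟨z, hz⟩ := M₁.O_nonempty c (fun i => F.back (ys i))
    obtain ⟨w, hw⟩ := F.nonempty z
    exact ⟨⟨w, z, hw⟩, by simpa [F.back_eq ⟨w, z, hw⟩ hw] using hz⟩

/-- The rexpansion realized by `e : M₂.V ↪ V_F` is preserving:
`F(x) ∩ V₂ ≠ ∅` for every `x ∈ V₁`. -/
def Preserving {M₂ : NMatrix L} (e : M₂.V ↪ F.expand.V) : Prop :=
  ∀ x : M₁.V, ∃ y : M₂.V, (e y).1 ∈ F.F x

/-- The rexpansion realized by `e : M₂.V ↪ V_F` is strongly preserving. -/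
def StronglyPreserving {M₂ : NMatrix L} (e : M₂.V ↪ F.expand.V) : Prop :=
  F.Preserving e ∧
  ∀ (c : L.Conn) (xs : Fin (L.arity c) → M₂.V) (y : M₁.V),
    y ∈ M₁.O c (fun i => F.back (e (xs i))) →
    ∃ w : M₂.V, (e w).1 ∈ F.F y ∧ w ∈ M₂.O c xs

end ExpansionFunction

open ExpansionFunction in
/-- (1) Every simple `F`-rexpansion is preserving; (2) the `F`-expansion itself is a
strongly preserving `F`-rexpansion of `M₁`; (3) if `M₁` is an ordinary (deterministic)
matrix, then every preserving `F`-rexpansion of `M₁` is strongly preserving. -/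
theorem rexpansion_preservation
    (L : PLang) (M₁ : NMatrix L) (W : Type) (F : ExpansionFunction M₁ W) :
    (∀ (M₂ : NMatrix L) (e : M₂.V ↪ F.expand.V),
      IsRefinementVia M₂ F.expand e → Function.Surjective e → F.Preserving e) ∧
    (IsRefinementVia F.expand F.expand (Function.Embedding.refl _) ∧
      F.StronglyPreserving (Function.Embedding.refl _)) ∧
    (M₁.IsDeterministic →
      ∀ (M₂ : NMatrix L) (e : M₂.V ↪ F.expand.V),
        IsRefinementVia M₂ F.expand e → F.Preserving e → F.StronglyPreserving e) := by
  refine ⟨?_, ⟨⟨fun _ => Iff.rfl, fun _ _ _ h => h⟩, ?_, ?_⟩, ?_⟩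
  · intro M₂ e _ hsurj x
    obtain ⟨w, hw⟩ := F.nonempty x
    obtain ⟨y, hy⟩ := hsurj ⟨w, x, hw⟩
    exact ⟨y, by simp [hy, hw]⟩
  · intro x
    obtain ⟨w, hw⟩ := F.nonempty x
    exact ⟨⟨w, x, hw⟩, hw⟩
  · intro c xs y hy
    obtain ⟨w, hw⟩ := F.nonempty y
    refine ⟨⟨w, y, hw⟩, hw, ?_⟩
    show F.back ⟨w, y, hw⟩ ∈ M₁.O c _
    rw [F.back_eq ⟨w, y, hw⟩ hw]
    exact hy
  · intro hdet M₂ e href hpres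
    refine ⟨hpres, fun c xs y hy => ?_⟩
    obtain ⟨w, hw⟩ := M₂.O_nonempty c xs
    have h2 := href.2 c xs w hw
    have : F.back (e w) ∈ M₁.O c (fun i => F.back (e (xs i))) := h2
    obtain ⟨z, hz⟩ := hdet c (fun i => F.back (e (xs i)))
    rw [hz] at this hy
    have hyz : F.back (e w) = y := this.trans hy.symm
    exact ⟨w, hyz ▸ F.back_mem (e w), hw⟩
end

section
/- Let M₁ = (V₁, D₁, O₁) and M₂ = (V₂, D₂, O₂) be N-matrices for a propositional language L. Then M₂ is a rexpansion of M₁ (i.e. an F-rexpansion for some expansion function F) if and only if there is a function f : V₂ → V₁ such that: (1) for every x ∈ V₂, x ∈ D₂ if and only if f(x) ∈ D₁; and (2) for every n-ary connective ⋄, all x₁,…,xₙ ∈ V₂ and every y ∈ ⋄̃_{M₂}(x₁,…,xₙ), one has f(y) ∈ ⋄̃_{M₁}(f(x₁),…,f(xₙ)). -/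
/-- `M₂` is a rexpansion of `M₁`: an `F`-rexpansion (a refinement of the `F`-expansion
of `M₁`) for some expansion function `F`. -/
def IsRexpansionOf {L : PLang} (M₂ M₁ : NMatrix L) : Prop :=
  ∃ (W : Type) (F : ExpansionFunction M₁ W) (e : M₂.V ↪ F.expand.V),
    IsRefinementVia M₂ F.expand e

/-- `M₂` is a rexpansion of `M₁` if and only if there is a function `f : V₂ → V₁` such
that (1) `x ∈ D₂ ↔ f x ∈ D₁`, and (2) `y ∈ ⋄̃₂(x₁,…,xₙ)` implies
`f y ∈ ⋄̃₁(f x₁,…,f xₙ)`. -/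
theorem isRexpansionOf_iff (L : PLang) (M₁ M₂ : NMatrix L) :
    IsRexpansionOf M₂ M₁ ↔
    ∃ f : M₂.V → M₁.V,
      (∀ x : M₂.V, x ∈ M₂.D ↔ f x ∈ M₁.D) ∧
      (∀ (c : L.Conn) (xs : Fin (L.arity c) → M₂.V) (y : M₂.V),
        y ∈ M₂.O c xs → f y ∈ M₁.O c (fun i => f (xs i))) := by
  constructor
  · rintro ⟨W, F, e, hD, hO⟩
    refine ⟨fun x => F.back (e x), fun x => (hD x), fun c xs y hy => hO c xs y hy⟩
  · rintro ⟨f, hD, hO⟩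
    set F : ExpansionFunction M₁ (M₂.V ⊕ M₁.V) :=
      { F := fun x => {w | Sum.elim f id w = x}
        nonempty := fun x => ⟨Sum.inr x, rfl⟩
        disjoint := by
          intro x₁ x₂ h
          ext w
          simp only [Set.mem_inter_iff, Set.mem_setOf_eq, Set.mem_empty_iff_false,
            iff_false, not_and]
          rintro rfl rfl
          exact h rfl } with hF
    have hmem : ∀ y : M₂.V, ∃ x, (Sum.inl y : M₂.V ⊕ M₁.V) ∈ F.F x :=
      fun y => ⟨f y, rfl⟩
    set e : M₂.V ↪ F.expand.V :=
      ⟨fun y => ⟨Sum.inl y, hmem y⟩, by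
        intro a b h
        simpa using congrArg Subtype.val h⟩ with he
    have hb : ∀ y : M₂.V, F.back (e y) = f y := fun y =>
      F.back_eq (e y) (x := f y) rfl
    refine ⟨_, F, e, ?_, ?_⟩
    · intro x
      show x ∈ M₂.D ↔ F.back (e x) ∈ M₁.D
      rw [hb]
      exact hD x
    · intro c xs y hy
      show F.back (e y) ∈ M₁.O c fun i => F.back (e (xs i))
      simp only [hb]
      exact hO c xs y hy
end

section
/- Let M₁ and M₂ be N-matrices for a propositional language L. If M₂ is a rexpansion of M₁, then the (dynamic) consequence relation of M₁ is contained in that of M₂: Γ ⊢_{M₁} Δ implies Γ ⊢_{M₂} Δ. Moreover, if M₂ is a strongly preserving rexpansion of M₁, then the two consequence relations coincide: ⊢_{M₁} = ⊢_{M₂}. -/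
/-- Formulas of a propositional language, generated from a countable set of
propositional variables by the connectives. -/
inductive PFrm (L : PLang) : Type
  | var : ℕ → PFrm L
  | conn : (c : L.Conn) → (Fin (L.arity c) → PFrm L) → PFrm L

/-- A (dynamic) valuation in an N-matrix. -/
def NMatrix.DynVal {L : PLang} (M : NMatrix L) (v : PFrm L → M.V) : Prop :=
  ∀ (c : L.Conn) (ψs : Fin (L.arity c) → PFrm L),
    v (PFrm.conn c ψs) ∈ M.O c (fun i => v (ψs i))

/-- The (dynamic) consequence relation of an N-matrix: every dynamic model of `Γ`
satisfies some formula of `Δ`. -/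
def NMatrix.Cons {L : PLang} (M : NMatrix L) (Γ Δ : Set (PFrm L)) : Prop :=
  ∀ v : PFrm L → M.V, M.DynVal v → (∀ γ ∈ Γ, v γ ∈ M.D) → ∃ δ ∈ Δ, v δ ∈ M.D

open ExpansionFunction in
noncomputable def liftVal {L : PLang} {M₁ M₂ : NMatrix L} {W : Type}
    (F : ExpansionFunction M₁ W) (e : M₂.V ↪ F.expand.V)
    (hS : F.StronglyPreserving e) (v₁ : PFrm L → M₁.V) (hv₁ : M₁.DynVal v₁) :
    (φ : PFrm L) → {w : M₂.V // (e w).1 ∈ F.F (v₁ φ)}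
  | .var n => ⟨(hS.1 (v₁ (.var n))).choose, (hS.1 (v₁ (.var n))).choose_spec⟩
  | .conn c ψs =>
      have h := hS.2 c (fun i => (liftVal F e hS v₁ hv₁ (ψs i)).1) (v₁ (.conn c ψs))
        (by
          have heq : (fun i => F.back (e ((liftVal F e hS v₁ hv₁ (ψs i)).1)))
              = fun i => v₁ (ψs i) := by
            funext i
            exact F.back_eq _ (liftVal F e hS v₁ hv₁ (ψs i)).2
          rw [heq]; exact hv₁ c ψs)
      ⟨h.choose, h.choose_spec.1⟩

open ExpansionFunction in
theorem liftVal_dyn {L : PLang} {M₁ M₂ : NMatrix L} {W : Type}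
    (F : ExpansionFunction M₁ W) (e : M₂.V ↪ F.expand.V)
    (hS : F.StronglyPreserving e) (v₁ : PFrm L → M₁.V) (hv₁ : M₁.DynVal v₁) :
    M₂.DynVal (fun φ => (liftVal F e hS v₁ hv₁ φ).1) := by
  intro c ψs
  show (liftVal F e hS v₁ hv₁ (.conn c ψs)).1 ∈ _
  rw [liftVal]
  have hp : v₁ (.conn c ψs) ∈
      M₁.O c (fun i => F.back (e ((liftVal F e hS v₁ hv₁ (ψs i)).1))) := by
    have heq : (fun i => F.back (e ((liftVal F e hS v₁ hv₁ (ψs i)).1)))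
        = fun i => v₁ (ψs i) := by
      funext i
      exact F.back_eq _ (liftVal F e hS v₁ hv₁ (ψs i)).2
    rw [heq]; exact hv₁ c ψs
  exact (hS.2 c (fun i => (liftVal F e hS v₁ hv₁ (ψs i)).1)
    (v₁ (.conn c ψs)) hp).choose_spec.2

open ExpansionFunction in
theorem rexpansion_mono {L : PLang} {M₁ M₂ : NMatrix L} {W : Type}
    (F : ExpansionFunction M₁ W) (e : M₂.V ↪ F.expand.V)
    (hr : IsRefinementVia M₂ F.expand e) :
    ∀ Γ Δ : Set (PFrm L), M₁.Cons Γ Δ → M₂.Cons Γ Δ := by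
  intro Γ Δ h v₂ hdyn hmod
  set v₁ : PFrm L → M₁.V := fun φ => F.back (e (v₂ φ)) with hv₁def
  have hdyn₁ : M₁.DynVal v₁ := by
    intro c ψs
    exact hr.2 c (fun i => v₂ (ψs i)) _ (hdyn c ψs)
  have hd : ∀ φ, v₂ φ ∈ M₂.D ↔ v₁ φ ∈ M₁.D := by
    intro φ
    rw [hr.1]
    exact Iff.rfl
  obtain ⟨δ, hδ, hδd⟩ := h v₁ hdyn₁ (fun γ hγ => (hd γ).mp (hmod γ hγ))
  exact ⟨δ, hδ, (hd δ).mpr hδd⟩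

open ExpansionFunction in
/-- If `M₂` is a rexpansion of `M₁`, then the consequence relation of `M₁` is contained
in that of `M₂`; if moreover the rexpansion is strongly preserving, the two consequence
relations coincide. -/
theorem rexpansion_consequence (L : PLang) (M₁ M₂ : NMatrix L) :
    (IsRexpansionOf M₂ M₁ →
      ∀ Γ Δ : Set (PFrm L), M₁.Cons Γ Δ → M₂.Cons Γ Δ) ∧
    (∀ (W : Type) (F : ExpansionFunction M₁ W) (e : M₂.V ↪ F.expand.V),
      IsRefinementVia M₂ F.expand e → F.StronglyPreserving e →
      ∀ Γ Δ : Set (PFrm L), M₁.Cons Γ Δ ↔ M₂.Cons Γ Δ) := by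
  constructor
  · rintro ⟨W, F, e, hr⟩
    exact rexpansion_mono F e hr
  · intro W F e hr hS Γ Δ
    constructor
    · exact rexpansion_mono F e hr Γ Δ
    · intro h v₁ hdyn₁ hmod₁
      set v₂ : PFrm L → M₂.V := fun φ => (liftVal F e hS v₁ hdyn₁ φ).1 with hv₂def
      have hback : ∀ φ, F.back (e (v₂ φ)) = v₁ φ := fun φ =>
        F.back_eq _ (liftVal F e hS v₁ hdyn₁ φ).2
      have hd : ∀ φ, v₂ φ ∈ M₂.D ↔ v₁ φ ∈ M₁.D := by
        intro φ
        rw [hr.1]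
        show F.back (e (v₂ φ)) ∈ M₁.D ↔ _
        rw [hback]
      obtain ⟨δ, hδ, hδd⟩ := h v₂ (liftVal_dyn F e hS v₁ hdyn₁)
        (fun γ hγ => (hd γ).mpr (hmod₁ γ hγ))
      exact ⟨δ, hδ, (hd δ).mp hδd⟩
end
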